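/- arXiv:1601.07806 — 8 statements merged into one kernel-verified Lean document; each statement's English description precedes it below -/
import Mathlib

section
/- Let φ be an N-function such that both φ and its complementary function φ* satisfy the Δ₂-condition. Then φ is of type (p₀, p₁) for some exponents 1 < p₀ ≤ p₁ < ∞: there exists C > 0 such that φ(s·t) ≤ C·max{s^{p₀}, s^{p₁}}·φ(t) for all s, t ≥ 0, where p₀, p₁ and C depend only on the Δ₂-constants of φ and φ*. -/
open MeasureTheory Real Filter

def IsNFunction (φ φ' : ℝ → ℝ) : Prop :=
  ConvexOn ℝ (Set.Ici 0) φ ∧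
  φ 0 = 0 ∧ φ' 0 = 0 ∧
  (∀ t : ℝ, 0 ≤ t → φ t = ∫ s in (0:ℝ)..t, φ' s) ∧
  (∀ t : ℝ, 0 ≤ t → ContinuousWithinAt φ' (Set.Ici t) t) ∧
  MonotoneOn φ' (Set.Ici 0) ∧
  (∀ t : ℝ, 0 < t → 0 < φ' t) ∧
  Tendsto φ' atTop atTop
/-- The Young conjugate `φ*(t) = sup_{s ≥ 0} (s·t − φ(s))`. -/
noncomputable def conjN (φ : ℝ → ℝ) (t : ℝ) : ℝ :=
  sSup {x : ℝ | ∃ s : ℝ, 0 ≤ s ∧ x = s * t - φ s}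

/-!
Iterating Δ₂ gives `f (2ⁿ x) ≤ cⁿ f x`, hence the upper type `f (l x) ≤ c l^(log₂ c) f x` for
`l ≥ 1`; applied to `φ` this is the bound for `s ≥ 1`. For `s ≤ 1` the upper type `q` of `φ*` is
transferred to a lower type `p = q / (q - 1)` of `φ` through Young's inequality and its equality case
`φ*(φ' x) = x φ' x - φ x`: if `φ*(l u) ≤ M φ*(u)` at `u = φ' x`, then `M φ(x) ≤ φ(M x / l)`.
Taking `c₂ ≥ 3` makes `q > 1`.
-/

def Delta2 (f : ℝ → ℝ) (c : ℝ) : Prop :=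
  ∀ t, 0 ≤ t → f (2 * t) ≤ c * f t

namespace Delta2

variable {f : ℝ → ℝ} {c : ℝ}

lemma mono_const (h : Delta2 f c) (hf : ∀ t, 0 ≤ t → 0 ≤ f t) {d : ℝ} (hcd : c ≤ d) :
    Delta2 f d := fun t ht =>
  (h t ht).trans (mul_le_mul_of_nonneg_right hcd (hf t ht))

lemma le_pow_mul (h : Delta2 f c) (hc : 0 ≤ c) (n : ℕ) {x : ℝ} (hx : 0 ≤ x) :
    f (2 ^ n * x) ≤ c ^ n * f x := by
  induction n with
  | zero => simp
  | succ n ih =>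
    calc f (2 ^ (n + 1) * x) = f (2 * (2 ^ n * x)) := by ring_nf
      _ ≤ c * f (2 ^ n * x) := h _ (by positivity)
      _ ≤ c * (c ^ n * f x) := mul_le_mul_of_nonneg_left ih hc
      _ = c ^ (n + 1) * f x := by ring

lemma le_mul_rpow_mul (h : Delta2 f c) (hc : 1 ≤ c) (hmono : MonotoneOn f (Set.Ici 0))
    (hf : ∀ t, 0 ≤ t → 0 ≤ f t) {l x : ℝ} (hl : 1 ≤ l) (hx : 0 ≤ x) :
    f (l * x) ≤ c * l ^ logb 2 c * f x := by
  obtain ⟨n, hnl, hln⟩ := exists_nat_pow_near hl one_lt_two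
  have hcn : c ^ n ≤ l ^ logb 2 c := by
    calc c ^ n = ((2 : ℝ) ^ n) ^ logb 2 c := by
          rw [← rpow_natCast, ← rpow_natCast, ← rpow_mul two_pos.le, mul_comm, rpow_mul two_pos.le,
            rpow_logb two_pos (by norm_num) (by linarith)]
      _ ≤ l ^ logb 2 c := rpow_le_rpow (by positivity) hnl (logb_nonneg one_lt_two hc)
  calc f (l * x) ≤ f (2 ^ (n + 1) * x) :=
        hmono (by simp only [Set.mem_Ici]; nlinarith) (by simp only [Set.mem_Ici]; positivity)
          (mul_le_mul_of_nonneg_right hln.le hx)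
    _ ≤ c ^ (n + 1) * f x := h.le_pow_mul (by linarith) (n + 1) hx
    _ = c * c ^ n * f x := by ring
    _ ≤ c * l ^ logb 2 c * f x := by gcongr; exact hf x hx

end Delta2

namespace IsNFunction

variable {φ φ' : ℝ → ℝ} (h : IsNFunction φ φ')
include h

lemma monotoneOn_deriv : MonotoneOn φ' (Set.Ici 0) := h.2.2.2.2.2.1

lemma deriv_nonneg {t : ℝ} (ht : 0 ≤ t) : 0 ≤ φ' t :=
  h.2.2.1 ▸ h.monotoneOn_deriv Set.self_mem_Ici ht ht

lemma intervalIntegrable_deriv {a b : ℝ} (ha : 0 ≤ a) (hab : a ≤ b) :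
    IntervalIntegrable φ' volume a b :=
  (h.monotoneOn_deriv.mono fun _ hx => ha.trans (Set.uIcc_of_le hab ▸ hx).1).intervalIntegrable

lemma sub_eq_integral {a b : ℝ} (ha : 0 ≤ a) (hab : a ≤ b) :
    φ b - φ a = ∫ s in a..b, φ' s := by
  rw [h.2.2.2.1 a ha, h.2.2.2.1 b (ha.trans hab), intervalIntegral.integral_interval_sub_left
    (h.intervalIntegrable_deriv le_rfl (ha.trans hab)) (h.intervalIntegrable_deriv le_rfl ha)]

lemma mul_deriv_le_sub {a b : ℝ} (ha : 0 ≤ a) (hab : a ≤ b) :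
    (b - a) * φ' a ≤ φ b - φ a := by
  rw [h.sub_eq_integral ha hab, ← smul_eq_mul, ← intervalIntegral.integral_const]
  exact intervalIntegral.integral_mono_on hab intervalIntegrable_const
    (h.intervalIntegrable_deriv ha hab) fun x hx => h.monotoneOn_deriv ha (ha.trans hx.1) hx.1

lemma sub_le_mul_deriv {a b : ℝ} (ha : 0 ≤ a) (hab : a ≤ b) :
    φ b - φ a ≤ (b - a) * φ' b := by
  rw [h.sub_eq_integral ha hab, ← smul_eq_mul, ← intervalIntegral.integral_const]
  exact intervalIntegral.integral_mono_on hab (h.intervalIntegrable_deriv ha hab)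
    intervalIntegrable_const fun x hx =>
      h.monotoneOn_deriv (ha.trans hx.1) (ha.trans hab) hx.2

lemma nonneg {t : ℝ} (ht : 0 ≤ t) : 0 ≤ φ t := by
  have := h.mul_deriv_le_sub le_rfl ht
  rw [h.2.1, h.2.2.1] at this
  linarith

lemma monotoneOn : MonotoneOn φ (Set.Ici 0) := fun a ha b _ hab => by
  nlinarith [h.mul_deriv_le_sub ha hab, h.deriv_nonneg ha]

lemma mul_deriv_sub_le {s t : ℝ} (hs : 0 ≤ s) (ht : 0 ≤ t) :
    s * φ' t - φ s ≤ t * φ' t - φ t := by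
  rcases le_total s t with hst | hts
  · nlinarith [h.sub_le_mul_deriv hs hst]
  · nlinarith [h.mul_deriv_le_sub ht hts]

lemma bddAbove_conjN (u : ℝ) : BddAbove {x : ℝ | ∃ s : ℝ, 0 ≤ s ∧ x = s * u - φ s} := by
  obtain ⟨t, ht⟩ := (h.2.2.2.2.2.2.2.eventually_ge_atTop u).and (eventually_ge_atTop 0) |>.exists
  refine ⟨t * φ' t - φ t, ?_⟩
  rintro _ ⟨s, hs, rfl⟩
  nlinarith [h.mul_deriv_sub_le hs ht.2]

lemma young {s : ℝ} (hs : 0 ≤ s) (u : ℝ) : s * u - φ s ≤ conjN φ u :=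
  le_csSup (h.bddAbove_conjN u) ⟨s, hs, rfl⟩

lemma conjN_deriv {t : ℝ} (ht : 0 ≤ t) : conjN φ (φ' t) = t * φ' t - φ t :=
  le_antisymm
    (csSup_le ⟨_, t, ht, rfl⟩ fun _ ⟨_, hs, hx⟩ => hx ▸ h.mul_deriv_sub_le hs ht)
    (h.young ht _)

lemma conjN_nonneg (u : ℝ) : 0 ≤ conjN φ u := by
  simpa [h.2.1] using h.young le_rfl u

lemma monotone_conjN : Monotone (conjN φ) := fun _ v huv =>
  csSup_le ⟨_, 0, le_rfl, rfl⟩ fun _ ⟨_, hs, hx⟩ =>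
    hx ▸ (sub_le_sub_right (mul_le_mul_of_nonneg_left huv hs) _).trans (h.young hs v)

lemma mul_le_of_conjN_le {x l M : ℝ} (hx : 0 ≤ x) (hl : 0 < l) (hM : 0 ≤ M)
    (hconj : conjN φ (l * φ' x) ≤ M * conjN φ (φ' x)) : M * φ x ≤ φ (M * x / l) := by
  have hyoung := h.young (s := M * x / l) (by positivity) (l * φ' x)
  have hcancel : M * x / l * (l * φ' x) = M * (x * φ' x) := by field_simp
  rw [h.conjN_deriv hx] at hconj
  linarith

variable {c p q : ℝ} (hpq : p.HolderConjugate q)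
  (hconj : ∀ l u, 1 ≤ l → 0 ≤ u → conjN φ (l * u) ≤ c * l ^ q * conjN φ u)
include hpq hconj

/-- Apply `mul_le_of_conjN_le` with `l = (c s)^(1 - p)`, chosen so that `M x / l = t`. -/
lemma le_rpow_div_mul_of_lt_one (hc : 0 < c) {s t : ℝ} (hs : 0 < s) (hcs : c * s < 1)
    (ht : 0 ≤ t) :
    φ (s * t) ≤ (c * s) ^ p / c * φ t := by
  set b := c * s with hb
  have hb0 : 0 < b := by positivity
  have hl : 1 ≤ b ^ (1 - p) :=
    one_le_rpow_of_pos_of_le_one_of_nonpos hb0 hcs.le (by linarith [hpq.lt])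
  have hlq : (b ^ (1 - p)) ^ q = b ^ (-p) := by
    rw [← rpow_mul hb0.le]
    congr 1
    linarith [hpq.sub_one_mul_conj]
  have hM := h.mul_le_of_conjN_le (by positivity) (by positivity) (by positivity)
    (hconj _ (φ' (s * t)) hl (h.deriv_nonneg (by positivity)))
  have ht' : c * (b ^ (1 - p)) ^ q * (s * t) / b ^ (1 - p) = t := by
    rw [hlq, show -p = (1 - p) + -1 by ring, rpow_add hb0, rpow_neg_one, hb]
    field_simp
  rw [ht', hlq, rpow_neg hb0.le] at hM
  have hbp : 0 < b ^ p := rpow_pos_of_pos hb0 p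
  rw [div_mul_eq_mul_div, le_div_iff₀ hc]
  calc φ (s * t) * c = b ^ p * (c * (b ^ p)⁻¹ * φ (s * t)) := by field_simp
    _ ≤ b ^ p * φ t := mul_le_mul_of_nonneg_left hM hbp.le

lemma le_rpow_mul_of_le_one (hc : 1 ≤ c) {s t : ℝ} (hs : 0 ≤ s) (hs1 : s ≤ 1) (ht : 0 ≤ t) :
    φ (s * t) ≤ c ^ p * s ^ p * φ t := by
  rw [← mul_rpow (by linarith) hs]
  rcases hs.eq_or_lt with rfl | hs0
  · simp [h.2.1, zero_rpow hpq.ne_zero]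
  rcases lt_or_ge (c * s) 1 with hcs | hcs
  · calc φ (s * t) ≤ (c * s) ^ p / c * φ t :=
          h.le_rpow_div_mul_of_lt_one hpq hconj (by linarith) hs0 hcs ht
      _ ≤ (c * s) ^ p * φ t := by
          gcongr
          · exact h.nonneg ht
          · exact div_le_self (by positivity) hc
  · calc φ (s * t) ≤ φ t := h.monotoneOn (by simp only [Set.mem_Ici]; positivity) ht (by nlinarith)
      _ ≤ (c * s) ^ p * φ t := le_mul_of_one_le_left (h.nonneg ht) (one_le_rpow hcs hpq.nonneg)

end IsNFunction

theorem type_p0_p1_general (c₁ c₂ : ℝ) :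
    ∃ p₀ p₁ C : ℝ, 1 < p₀ ∧ p₀ ≤ p₁ ∧ 0 < C ∧
      ∀ φ φ' : ℝ → ℝ, IsNFunction φ φ' →
        (∀ t : ℝ, 0 ≤ t → φ (2 * t) ≤ c₁ * φ t) →
        (∀ t : ℝ, 0 ≤ t → conjN φ (2 * t) ≤ c₂ * conjN φ t) →
        ∀ s t : ℝ, 0 ≤ s → 0 ≤ t →
          φ (s * t) ≤ C * max (s ^ p₀) (s ^ p₁) * φ t := by
  set c := max c₁ 1
  set d := max c₂ 3
  have hd : 1 ≤ d := by linarith [le_max_right c₂ 3]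
  have hq : 1 < logb 2 d := by
    rw [lt_logb_iff_rpow_lt one_lt_two (by positivity), rpow_one]
    linarith [le_max_right c₂ 3]
  have hpq := (HolderConjugate.conjExponent hq).symm
  set p₀ := conjExponent (logb 2 d)
  refine ⟨p₀, max (logb 2 c) p₀, max c (d ^ p₀), hpq.lt, le_max_right _ _, by positivity, ?_⟩
  intro φ φ' hN hΔ hΔconj s t hs ht
  have hΔ' : Delta2 φ c := Delta2.mono_const hΔ (fun _ => hN.nonneg) (le_max_left _ _)
  have hΔconj' : Delta2 (conjN φ) d :=
    Delta2.mono_const hΔconj (fun u _ => hN.conjN_nonneg u) (le_max_left _ _)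
  rcases le_total 1 s with hs1 | hs1
  · calc φ (s * t) ≤ c * s ^ logb 2 c * φ t :=
          hΔ'.le_mul_rpow_mul (le_max_right _ _) hN.monotoneOn (fun _ => hN.nonneg) hs1 ht
      _ ≤ max c (d ^ p₀) * max (s ^ p₀) (s ^ max (logb 2 c) p₀) * φ t := by
          gcongr
          · exact hN.nonneg ht
          · exact le_max_left _ _
          · exact (rpow_le_rpow_of_exponent_le hs1 (le_max_left _ _)).trans (le_max_right _ _)
  · calc φ (s * t) ≤ d ^ p₀ * s ^ p₀ * φ t :=
          hN.le_rpow_mul_of_le_one hpq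
            (fun l u hl hu => hΔconj'.le_mul_rpow_mul hd
              (hN.monotone_conjN.monotoneOn _) (fun u _ => hN.conjN_nonneg u) hl hu)
            hd hs hs1 ht
      _ ≤ max c (d ^ p₀) * max (s ^ p₀) (s ^ max (logb 2 c) p₀) * φ t := by
          gcongr
          · exact hN.nonneg ht
          · exact le_max_right _ _
          · exact le_max_left _ _

/-- If an N-function and its conjugate both satisfy Δ₂, then φ is of type (p₀, p₁) with
`1 < p₀ ≤ p₁ < ∞`, with p₀, p₁, C depending only on the Δ₂-constants: here we quantify the
Δ₂-constants first and obtain p₀, p₁, C uniformly for all such φ. -/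
theorem type_p0_p1 (c₁ c₂ : ℝ) (hc₁ : 0 < c₁) (hc₂ : 0 < c₂) :
    ∃ p₀ p₁ C : ℝ, 1 < p₀ ∧ p₀ ≤ p₁ ∧ 0 < C ∧
      ∀ φ φ' : ℝ → ℝ, IsNFunction φ φ' →
        (∀ t : ℝ, 0 ≤ t → φ (2 * t) ≤ c₁ * φ t) →
        (∀ t : ℝ, 0 ≤ t → conjN φ (2 * t) ≤ c₂ * conjN φ t) →
        ∀ s t : ℝ, 0 ≤ s → 0 ≤ t →
          φ (s * t) ≤ C * max (s ^ p₀) (s ^ p₁) * φ t :=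
  type_p0_p1_general c₁ c₂
end

section
/- Let φ be an N-function of class C¹([0,∞)) ∩ C²((0,∞)) satisfying φ'(t) ∼ t·φ''(t) uniformly in t > 0 (i.e. there are constants c₁, c₂ > 0 with c₁·t·φ''(t) ≤ φ'(t) ≤ c₂·t·φ''(t)). Then there exist constants C₁, C₂ > 0 such that for all z₁, z₂ ∈ ℝ^{Nn} with |z₁| + |z₂| > 0 and all μ ≥ 0: C₁·φ''(μ + |z₁| + |z₂|) ≤ ∫₀¹ ∫₀¹ t·φ''(μ + |z₁ + s·t·z₂|) ds dt ≤ C₂·φ''(μ + |z₁| + |z₂|). -/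
open MeasureTheory Real Filter

/-- The Assumption: `φ` is an N-function of class `C¹([0,∞)) ∩ C²((0,∞))`,
with derivative `φ'` and second derivative `φ''`. -/
def SatisfiesAssumption (φ φ' φ'' : ℝ → ℝ) : Prop :=
  IsNFunction φ φ' ∧
  (∀ t : ℝ, 0 ≤ t → HasDerivWithinAt φ (φ' t) (Set.Ici 0) t) ∧
  ContinuousOn φ' (Set.Ici 0) ∧
  (∀ t : ℝ, 0 < t → HasDerivAt φ' (φ'' t) t) ∧
  ContinuousOn φ'' (Set.Ioi 0)

/-!
Substituting `r = s t`, the inner integral is `F t = ∫₀ᵗ φ''(μ + |z₁ + r z₂|) dr`, which is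
nondecreasing in `t`; hence the double integral lies between `F (1/2) / 2` and `F 1`.

Since `φ'(t) ∼ t φ''(t)`, `φ'(t) / t^k` is nonincreasing for `k ≥ 1 / c₁` while `φ'` is
nondecreasing, so `φ''` takes comparable values at comparable arguments. For the lower bound,
`|z₁ + r z₂| ≳ |z₁| + |z₂|` on a subinterval of `[0, 1/2]` of length `1/8`. For the upper bound,
if `|z₂| ≲ μ + |z₁|` every argument is comparable to `P = μ + |z₁| + |z₂|`. Otherwise, by
Pythagoras, `|z₁ + r z₂|` is comparable to `d + |r - r₀| |z₂|`, where `z₁ + r₀ z₂` is the point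
of the line closest to the origin and `d` its norm; along this profile `φ''` integrates
explicitly to `≲ φ'(P) / |z₂| ≲ φ''(P)`.
-/

open Set

lemma antitoneOn_div_pow_of_mul_deriv_le {f f' : ℝ → ℝ} {k : ℕ}
    (hf : ∀ t, 0 < t → HasDerivAt f (f' t) t) (hle : ∀ t, 0 < t → t * f' t ≤ k * f t) :
    AntitoneOn (fun t => f t / t ^ k) (Ioi 0) := by
  have hderiv : ∀ t ∈ Ioi (0 : ℝ), HasDerivAt (fun t => f t / t ^ k)
      ((f' t * t ^ k - f t * (k * t ^ (k - 1))) / (t ^ k) ^ 2) t := fun t ht =>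
    (hf t ht).div (hasDerivAt_pow k t) (pow_ne_zero k (ne_of_gt ht))
  refine antitoneOn_of_deriv_nonpos (convex_Ioi 0)
    (fun t ht => (hderiv t ht).continuousAt.continuousWithinAt)
    (fun t ht => (hderiv t (interior_subset ht)).differentiableAt.differentiableWithinAt)
    fun t ht => ?_
  rw [interior_Ioi] at ht
  rw [(hderiv t ht).deriv]
  have ht : (0 : ℝ) < t := ht
  have hnum : t * (f' t * t ^ k - f t * (k * t ^ (k - 1))) = t ^ k * (t * f' t - k * f t) := by
    cases k with
    | zero => simp
    | succ k => simp only [Nat.add_sub_cancel, pow_succ, Nat.cast_succ]; ring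
  have : t ^ k * (t * f' t - k * f t) ≤ 0 :=
    mul_nonpos_of_nonneg_of_nonpos (by positivity) (by linarith [hle t ht])
  exact div_nonpos_of_nonpos_of_nonneg (nonpos_of_mul_nonpos_right (hnum ▸ this) ht) (by positivity)

section Comparison

variable {φ' φ'' : ℝ → ℝ} {c₁ c₂ : ℝ}

lemma phi''_pos (hc₂ : 0 < c₂) (hpos : ∀ t, 0 < t → 0 < φ' t)
    (hle : ∀ t, 0 < t → φ' t ≤ c₂ * (t * φ'' t)) : ∀ t, 0 < t → 0 < φ'' t := fun t ht =>
  pos_of_mul_pos_right (pos_of_mul_pos_right ((hpos t ht).trans_le (hle t ht)) hc₂.le) ht.le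

lemma phi'_le_pow_mul (hc₁ : 0 < c₁) (hderiv : ∀ t, 0 < t → HasDerivAt φ' (φ'' t) t)
    (hpos : ∀ t, 0 < t → 0 < φ' t) (hle : ∀ t, 0 < t → c₁ * (t * φ'' t) ≤ φ' t)
    {k : ℕ} (hk : 1 ≤ k * c₁) {K x y : ℝ} (hx : 0 < x) (hxy : x ≤ y) (hyK : y ≤ K * x) :
    φ' y ≤ K ^ k * φ' x := by
  have hy : 0 < y := hx.trans_le hxy
  have hanti := antitoneOn_div_pow_of_mul_deriv_le hderiv (k := k) (fun t ht => by
    nlinarith [hle t ht, hpos t ht, mul_le_mul_of_nonneg_right hk (hpos t ht).le])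
    hx hy hxy
  rw [div_le_div_iff₀ (by positivity) (by positivity)] at hanti
  have hpow : y ^ k ≤ K ^ k * x ^ k := by
    rw [← mul_pow]; exact pow_le_pow_left₀ hy.le hyK k
  have : φ' y * x ^ k ≤ K ^ k * φ' x * x ^ k := by
    nlinarith [mul_le_mul_of_nonneg_left hpow (hpos x hx).le]
  exact le_of_mul_le_mul_right this (by positivity)

lemma phi''_le_mul_phi''_of_le (hc₁ : 0 < c₁) (hpos : ∀ t, 0 < t → 0 < φ' t)
    (hmono : MonotoneOn φ' (Ici 0))
    (hequiv : ∀ t, 0 < t → c₁ * (t * φ'' t) ≤ φ' t ∧ φ' t ≤ c₂ * (t * φ'' t))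
    {K x y : ℝ} (hx : 0 < x) (hxy : x ≤ y) (hyK : y ≤ K * x) :
    φ'' x ≤ c₂ / c₁ * K * φ'' y := by
  have hy : 0 < y := hx.trans_le hxy
  have hy' : 0 < c₂ * φ'' y := by nlinarith [hpos y hy, (hequiv y hy).2]
  have : x * (c₁ * φ'' x) ≤ x * (c₂ * K * φ'' y) := calc
    x * (c₁ * φ'' x) ≤ φ' x := by linarith [(hequiv x hx).1]
    _ ≤ φ' y := hmono hx.le (hx.le.trans hxy) hxy
    _ ≤ c₂ * (y * φ'' y) := (hequiv y hy).2
    _ ≤ x * (c₂ * K * φ'' y) := by nlinarith [mul_le_mul_of_nonneg_right hyK hy'.le]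
  rw [div_mul_eq_mul_div, div_mul_eq_mul_div, le_div_iff₀ hc₁]
  nlinarith [le_of_mul_le_mul_left this hx]

lemma phi''_le_mul_pow_phi''_of_le (hc₁ : 0 < c₁) (hderiv : ∀ t, 0 < t → HasDerivAt φ' (φ'' t) t)
    (hpos : ∀ t, 0 < t → 0 < φ' t)
    (hequiv : ∀ t, 0 < t → c₁ * (t * φ'' t) ≤ φ' t ∧ φ' t ≤ c₂ * (t * φ'' t))
    {k : ℕ} (hk : 1 ≤ k * c₁) {K x y : ℝ} (hx : 0 < x) (hxy : x ≤ y) (hyK : y ≤ K * x) :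
    φ'' y ≤ c₂ / c₁ * K ^ k * φ'' x := by
  have hy : 0 < y := hx.trans_le hxy
  have hK : 0 ≤ K ^ k := pow_nonneg (nonneg_of_mul_nonneg_left (hy.le.trans hyK) hx) k
  have hx' : 0 < c₂ * φ'' x := by nlinarith [hpos x hx, (hequiv x hx).2]
  have : y * (c₁ * φ'' y) ≤ y * (c₂ * K ^ k * φ'' x) := calc
    y * (c₁ * φ'' y) ≤ φ' y := by linarith [(hequiv y hy).1]
    _ ≤ K ^ k * φ' x :=
      phi'_le_pow_mul hc₁ hderiv hpos (fun t ht => (hequiv t ht).1) hk hx hxy hyK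
    _ ≤ K ^ k * (c₂ * (x * φ'' x)) := mul_le_mul_of_nonneg_left (hequiv x hx).2 hK
    _ ≤ y * (c₂ * K ^ k * φ'' x) := by
      nlinarith [mul_le_mul_of_nonneg_right hxy (mul_nonneg hK hx'.le)]
  rw [div_mul_eq_mul_div, div_mul_eq_mul_div, le_div_iff₀ hc₁]
  nlinarith [le_of_mul_le_mul_left this hy]

end Comparison

lemma intervalIntegrable_and_integral_comp_abs_sub {f : ℝ → ℝ} {R : ℝ} (hR : 0 ≤ R)
    (hf : IntervalIntegrable f volume 0 R) (c : ℝ) :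
    IntervalIntegrable (fun r => f |r - c|) volume (c - R) (c + R) ∧
      ∫ r in (c - R)..(c + R), f |r - c| = 2 * ∫ s in (0 : ℝ)..R, f s := by
  have heq : EqOn (fun s => f |s|) f (uIcc 0 R) := fun s hs => by
    rw [uIcc_of_le hR] at hs
    simp only [abs_of_nonneg hs.1]
  have hright : IntervalIntegrable (fun s => f |s|) volume 0 R :=
    hf.congr fun s hs => (heq (uIoc_subset_uIcc hs)).symm
  have hleft : IntervalIntegrable (fun s => f |s|) volume (-R) 0 := by
    simpa using ((IntervalIntegrable.iff_comp_neg (by finiteness)).1 hright).symm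
  have hshift := (hleft.trans hright).comp_sub_right c
  rw [neg_add_eq_sub, add_comm R c] at hshift
  refine ⟨hshift, ?_⟩
  rw [intervalIntegral.integral_comp_sub_right (fun s => f |s|) c, sub_sub_cancel_left,
    add_sub_cancel_left, ← intervalIntegral.integral_add_adjacent_intervals hleft hright]
  have hsymm : ∫ s in (-R)..0, f |s| = ∫ s in (0 : ℝ)..R, f |s| := by
    simpa using (intervalIntegral.integral_comp_neg (a := 0) (b := R) (fun s => f |s|)).symm
  rw [hsymm, intervalIntegral.integral_congr heq]
  ring

lemma intervalIntegrable_and_integral_le_of_ae_le {f g : ℝ → ℝ} {a b : ℝ} (hab : a ≤ b)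
    (hg : IntervalIntegrable g volume a b) (hf : AEStronglyMeasurable f (volume.restrict (Ioc a b)))
    (hfg : ∀ᵐ x, x ∈ Icc a b → 0 ≤ f x ∧ f x ≤ g x) :
    IntervalIntegrable f volume a b ∧ ∫ x in a..b, f x ≤ ∫ x in a..b, g x := by
  have hfg' : ∀ᵐ x ∂volume.restrict (Icc a b), 0 ≤ f x ∧ f x ≤ g x :=
    (ae_restrict_iff' measurableSet_Icc).2 hfg
  have hfi : IntervalIntegrable f volume a b := by
    refine hg.mono_fun' (by rwa [uIoc_of_le hab]) ?_
    rw [uIoc_of_le hab]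
    filter_upwards [ae_mono (Measure.restrict_mono Ioc_subset_Icc_self le_rfl) hfg'] with x hx
    rw [Real.norm_of_nonneg hx.1]
    exact hx.2
  exact ⟨hfi, intervalIntegral.integral_mono_ae_restrict hab hfi hg (hfg'.mono fun x hx => hx.2)⟩

lemma aestronglyMeasurable_comp_of_ae_pos {α : Type*} [TopologicalSpace α] [MeasurableSpace α]
    [OpensMeasurableSpace α] {μ : Measure α} {ψ : ℝ → ℝ} {h : α → ℝ}
    (hψ : ContinuousOn ψ (Ioi 0)) (hh : Continuous h) (hpos : ∀ᵐ x ∂μ, 0 < h x) :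
    AEStronglyMeasurable (fun x => ψ (h x)) μ := by
  have := (hψ.comp hh.continuousOn (mapsTo_preimage h _)).aestronglyMeasurable (μ := μ)
    (isOpen_Ioi.preimage hh).measurableSet
  rwa [Measure.restrict_eq_self_of_ae_mem (s := h ⁻¹' Ioi 0) hpos] at this

lemma integral_integral_mul_comp_mul_bounds {g : ℝ → ℝ} (hg : IntervalIntegrable g volume 0 1)
    (hg0 : ∀ᵐ r, 0 ≤ g r) :
    (∫ r in (0 : ℝ)..1 / 2, g r) / 2 ≤ ∫ t in (0 : ℝ)..1, ∫ s in (0 : ℝ)..1, t * g (s * t) ∧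
      ∫ t in (0 : ℝ)..1, ∫ s in (0 : ℝ)..1, t * g (s * t) ≤ ∫ r in (0 : ℝ)..1, g r := by
  set F : ℝ → ℝ := fun t => ∫ r in (0 : ℝ)..t, g r with hF
  have hinner : ∀ t, ∫ s in (0 : ℝ)..1, t * g (s * t) = F t := fun t => by
    rw [intervalIntegral.integral_const_mul, ← smul_eq_mul,
      intervalIntegral.smul_integral_comp_mul_right, zero_mul, one_mul]
  have hgt : ∀ t ∈ Icc (0 : ℝ) 1, IntervalIntegrable g volume 0 t := fun t ht =>
    hg.mono_set (by rw [uIcc_of_le ht.1, uIcc_of_le zero_le_one]; exact Icc_subset_Icc le_rfl ht.2)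
  have hmono : MonotoneOn F (Icc 0 1) := fun t₁ ht₁ t₂ ht₂ h12 => by
    have hsub := intervalIntegral.integral_interval_sub_left (hgt t₂ ht₂) (hgt t₁ ht₁)
    have := intervalIntegral.integral_nonneg_of_ae h12 hg0
    simp only [hF]
    linarith
  have hF0 : ∀ t ∈ Icc (0 : ℝ) 1, 0 ≤ F t := fun t ht =>
    intervalIntegral.integral_nonneg_of_ae ht.1 hg0
  have hFi : IntervalIntegrable F volume 0 1 :=
    (hmono.mono (uIcc_of_le zero_le_one).subset).intervalIntegrable
  simp only [hinner]
  constructor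
  · calc F (1 / 2) / 2 = ∫ _ in (1 / 2 : ℝ)..1, F (1 / 2) := by simp; ring
      _ ≤ ∫ t in (1 / 2 : ℝ)..1, F t :=
        intervalIntegral.integral_mono_on (by norm_num) intervalIntegrable_const
          (hFi.mono_set (by
            rw [uIcc_of_le (by norm_num), uIcc_of_le zero_le_one]
            exact Icc_subset_Icc (by norm_num) le_rfl))
          fun t ht => hmono (by constructor <;> norm_num) ⟨by linarith [ht.1], ht.2⟩ ht.1
      _ ≤ ∫ t in (0 : ℝ)..1, F t :=
        intervalIntegral.integral_mono_interval (by norm_num) (by norm_num) le_rfl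
          ((ae_restrict_iff' measurableSet_Ioc).2
            (Eventually.of_forall fun t ht => hF0 t (Ioc_subset_Icc_self ht))) hFi
  · calc ∫ t in (0 : ℝ)..1, F t ≤ ∫ _ in (0 : ℝ)..1, F 1 :=
        intervalIntegral.integral_mono_on zero_le_one hFi intervalIntegrable_const
          fun t ht => hmono ht ⟨zero_le_one, le_rfl⟩ ht.2
      _ = F 1 := by simp

section FundamentalTheorem

variable {φ' φ'' : ℝ → ℝ}

lemma intervalIntegrable_and_integral_phi''_affine (hcont : ContinuousOn φ' (Ici 0))
    (hderiv : ∀ t, 0 < t → HasDerivAt φ' (φ'' t) t) (hnn : ∀ t, 0 < t → 0 ≤ φ'' t)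
    {A β R : ℝ} (hA : 0 ≤ A) (hβ : 0 < β) (hR : 0 ≤ R) :
    IntervalIntegrable (fun s => φ'' (A + β * s)) volume 0 R ∧
      ∫ s in (0 : ℝ)..R, φ'' (A + β * s) = (φ' (A + β * R) - φ' A) / β := by
  have hG : ContinuousOn (fun s => φ' (A + β * s) / β) (Icc 0 R) :=
    (hcont.comp (by fun_prop : Continuous fun s : ℝ => A + β * s).continuousOn
      fun s hs => by simp only [mem_Ici]; nlinarith [hs.1]).div_const β
  have hG' : ∀ s ∈ Ioo 0 R, HasDerivAt (fun s => φ' (A + β * s) / β) (φ'' (A + β * s)) s := by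
    intro s hs
    have hpos : 0 < A + β * s := by nlinarith [hs.1]
    have := ((hderiv _ hpos).comp s (((hasDerivAt_id s).const_mul β).const_add A)).div_const β
    simpa [hβ.ne'] using this
  have hint : IntervalIntegrable (fun s => φ'' (A + β * s)) volume 0 R :=
    (intervalIntegrable_iff_integrableOn_Ioc_of_le hR).2
      (intervalIntegral.integrableOn_deriv_of_nonneg hG hG' fun s hs => hnn _ (by nlinarith [hs.1]))
  refine ⟨hint, ?_⟩
  rw [intervalIntegral.integral_eq_sub_of_hasDerivAt_of_le hR hG hG' hint]
  simp [sub_div]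

lemma intervalIntegrable_and_integral_phi''_abs_sub_le (hcont : ContinuousOn φ' (Ici 0))
    (hderiv : ∀ t, 0 < t → HasDerivAt φ' (φ'' t) t) (hnn : ∀ t, 0 < t → 0 ≤ φ'' t)
    (hmono : MonotoneOn φ' (Ici 0)) (h0 : φ' 0 = 0)
    {A β c X : ℝ} (hA : 0 ≤ A) (hβ : 0 < β) (hX : A + β * (|c| + 1) ≤ X) :
    IntervalIntegrable (fun r => φ'' (A + β * |r - c|)) volume 0 1 ∧
      ∫ r in (0 : ℝ)..1, φ'' (A + β * |r - c|) ≤ 2 * φ' X / β := by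
  have hR : 0 ≤ |c| + 1 := by positivity
  obtain ⟨hfi, hfv⟩ := intervalIntegrable_and_integral_phi''_affine hcont hderiv hnn hA hβ hR
  obtain ⟨hMi, hMv⟩ := intervalIntegrable_and_integral_comp_abs_sub hR hfi c
  have hlo : c - (|c| + 1) ≤ 0 := by linarith [le_abs_self c]
  have hhi : 1 ≤ c + (|c| + 1) := by linarith [neg_abs_le c]
  have hMnn : ∀ᵐ r ∂volume.restrict (Ioc (c - (|c| + 1)) (c + (|c| + 1))),
      0 ≤ φ'' (A + β * |r - c|) := by
    refine ae_restrict_of_ae ?_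
    filter_upwards [(countable_singleton c).ae_notMem volume] with r hr
    exact hnn _ (by have := abs_pos.2 (sub_ne_zero.2 hr); positivity)
  refine ⟨hMi.mono_set (by
    rw [uIcc_of_le zero_le_one, uIcc_of_le (by linarith)]; exact Icc_subset_Icc hlo hhi), ?_⟩
  have hφ'A : 0 ≤ φ' A := h0 ▸ hmono self_mem_Ici hA hA
  calc ∫ r in (0 : ℝ)..1, φ'' (A + β * |r - c|)
      ≤ ∫ r in (c - (|c| + 1))..(c + (|c| + 1)), φ'' (A + β * |r - c|) :=
        intervalIntegral.integral_mono_interval hlo zero_le_one hhi hMnn hMi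
    _ = 2 * ((φ' (A + β * (|c| + 1)) - φ' A) / β) := by rw [hMv, hfv]
    _ ≤ 2 * φ' X / β := by
        rw [mul_div_assoc]
        gcongr
        have hpos : 0 ≤ A + β * (|c| + 1) := by positivity
        linarith [hmono hpos (hpos.trans hX) hX]

end FundamentalTheorem

section Geometry

variable {E : Type*}

lemma abs_norm_sub_le_norm_add_smul_and_le [NormedAddCommGroup E] [NormedSpace ℝ E]
    (z₁ z₂ : E) {r : ℝ} (hr : 0 ≤ r) :
    |‖z₁‖ - r * ‖z₂‖| ≤ ‖z₁ + r • z₂‖ ∧ ‖z₁ + r • z₂‖ ≤ ‖z₁‖ + r * ‖z₂‖ := by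
  have hnorm : ‖r • z₂‖ = r * ‖z₂‖ := by rw [norm_smul, Real.norm_of_nonneg hr]
  refine ⟨?_, hnorm ▸ norm_add_le _ _⟩
  simpa [hnorm, sub_neg_eq_add] using abs_norm_sub_norm_le z₁ (-(r • z₂))

lemma ae_pos_add_norm_add_smul [NormedAddCommGroup E] [NormedSpace ℝ E] {z₁ z₂ : E} {μ : ℝ}
    (hμ : 0 ≤ μ) (hP : 0 < μ + ‖z₁‖ + ‖z₂‖) : ∀ᵐ r : ℝ, 0 < μ + ‖z₁ + r • z₂‖ := by
  have hzero : ∀ r : ℝ, ¬ 0 < μ + ‖z₁ + r • z₂‖ → μ = 0 ∧ z₁ + r • z₂ = 0 := fun r hr => by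
    have := norm_nonneg (z₁ + r • z₂)
    exact ⟨by linarith, norm_eq_zero.1 (by linarith)⟩
  rw [ae_iff]
  refine Subsingleton.measure_zero (fun r₁ h₁ r₂ h₂ => ?_) _
  obtain ⟨hμ0, h₁⟩ := hzero r₁ h₁
  have h₂ := (hzero r₂ h₂).2
  have hdiff : (r₁ - r₂) • z₂ = 0 := by
    rw [sub_smul, ← add_sub_add_left_eq_sub _ _ z₁, h₁, h₂, sub_zero]
  rcases smul_eq_zero.1 hdiff with h | h
  · exact sub_eq_zero.1 h
  · rw [h, smul_zero, add_zero] at h₁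
    simp [hμ0, h₁, h] at hP

lemma exists_norm_add_norm_le_ten_mul_norm_add_smul [NormedAddCommGroup E] [NormedSpace ℝ E]
    (z₁ z₂ : E) : ∃ p : ℝ, 0 ≤ p ∧ p + 1 / 8 ≤ 1 / 2 ∧
      ∀ r ∈ Icc p (p + 1 / 8), ‖z₁‖ + ‖z₂‖ ≤ 10 * ‖z₁ + r • z₂‖ := by
  by_cases h : ‖z₂‖ ≤ 4 * ‖z₁‖
  · refine ⟨0, le_rfl, by norm_num, fun r hr => ?_⟩
    have := (abs_le.1 (abs_norm_sub_le_norm_add_smul_and_le z₁ z₂ hr.1).1).2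
    nlinarith [hr.2, norm_nonneg z₂]
  · refine ⟨3 / 8, by norm_num, by norm_num, fun r hr => ?_⟩
    have := (abs_le.1 (abs_norm_sub_le_norm_add_smul_and_le z₁ z₂
      ((by norm_num : (0 : ℝ) ≤ 3 / 8).trans hr.1)).1).1
    nlinarith [hr.1, norm_nonneg z₂]

lemma exists_norm_add_smul_le_and_le [NormedAddCommGroup E] [InnerProductSpace ℝ E]
    (z₁ z₂ : E) : ∃ r₀ d : ℝ, 0 ≤ d ∧ ∀ r : ℝ,
      d + |r - r₀| * ‖z₂‖ ≤ 2 * ‖z₁ + r • z₂‖ ∧ ‖z₁ + r • z₂‖ ≤ d + |r - r₀| * ‖z₂‖ := by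
  set r₀ := -inner ℝ z₁ z₂ / ‖z₂‖ ^ 2
  have horth : inner ℝ (z₁ + r₀ • z₂) z₂ = 0 := by
    rcases eq_or_ne z₂ 0 with rfl | hz
    · simp
    · rw [inner_add_left, real_inner_smul_left, real_inner_self_eq_norm_sq]
      have : ‖z₂‖ ^ 2 ≠ 0 := by positivity
      simp only [r₀]
      field_simp
      ring
  refine ⟨r₀, ‖z₁ + r₀ • z₂‖, norm_nonneg _, fun r => ?_⟩
  have hpyth := norm_add_sq_eq_norm_sq_add_norm_sq_real (x := z₁ + r₀ • z₂) (y := (r - r₀) • z₂)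
    (by rw [real_inner_smul_right, horth, mul_zero])
  rw [show z₁ + r₀ • z₂ + (r - r₀) • z₂ = z₁ + r • z₂ by rw [sub_smul]; abel,
    norm_smul, Real.norm_eq_abs] at hpyth
  have ha := norm_nonneg (z₁ + r₀ • z₂)
  have hb : 0 ≤ |r - r₀| * ‖z₂‖ := by positivity
  have hh := norm_nonneg (z₁ + r • z₂)
  constructor
  · nlinarith [sq_nonneg (‖z₁ + r₀ • z₂‖ - |r - r₀| * ‖z₂‖)]
  · nlinarith [mul_nonneg ha hb]

end Geometry

section Profile

variable {φ φ' φ'' : ℝ → ℝ} {c₁ c₂ : ℝ} {E : Type*} [NormedAddCommGroup E]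

lemma intervalIntegrable_and_integral_phi''_le_of_two_mul_norm_le [NormedSpace ℝ E]
    (hA : SatisfiesAssumption φ φ' φ'') (hc₁ : 0 < c₁) (hc₂ : 0 < c₂)
    (hequiv : ∀ t, 0 < t → c₁ * (t * φ'' t) ≤ φ' t ∧ φ' t ≤ c₂ * (t * φ'' t))
    {z₁ z₂ : E} {μ : ℝ} (hμ : 0 ≤ μ) (hP : 0 < μ + ‖z₁‖ + ‖z₂‖) (hz : 2 * ‖z₂‖ ≤ μ + ‖z₁‖) :
    IntervalIntegrable (fun r => φ'' (μ + ‖z₁ + r • z₂‖)) volume 0 1 ∧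
      ∫ r in (0 : ℝ)..1, φ'' (μ + ‖z₁ + r • z₂‖) ≤ 3 * (c₂ / c₁) * φ'' (μ + ‖z₁‖ + ‖z₂‖) := by
  obtain ⟨⟨-, -, -, -, -, hmono, hpos, -⟩, -, -, -, hcont''⟩ := hA
  have hbound : ∀ r ∈ Icc (0 : ℝ) 1, 0 ≤ φ'' (μ + ‖z₁ + r • z₂‖) ∧
      φ'' (μ + ‖z₁ + r • z₂‖) ≤ 3 * (c₂ / c₁) * φ'' (μ + ‖z₁‖ + ‖z₂‖) := fun r hr => by
    obtain ⟨hlow, hup⟩ := abs_norm_sub_le_norm_add_smul_and_le z₁ z₂ hr.1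
    have hr₂ : r * ‖z₂‖ ≤ ‖z₂‖ := mul_le_of_le_one_left (norm_nonneg _) hr.2
    have hx : 0 < μ + ‖z₁ + r • z₂‖ := by linarith [(abs_le.1 hlow).2]
    refine ⟨(phi''_pos hc₂ hpos (fun t ht => (hequiv t ht).2) _ hx).le, ?_⟩
    have := phi''_le_mul_phi''_of_le hc₁ hpos hmono hequiv (K := 3) (y := μ + ‖z₁‖ + ‖z₂‖) hx
      (by linarith) (by linarith [(abs_le.1 hlow).2])
    linarith
  obtain ⟨hint, hle⟩ := intervalIntegrable_and_integral_le_of_ae_le zero_le_one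
    intervalIntegrable_const
    ((aestronglyMeasurable_comp_of_ae_pos hcont'' (by fun_prop)
      (ae_pos_add_norm_add_smul hμ hP)).restrict)
    (Eventually.of_forall hbound)
  exact ⟨hint, by simpa using hle⟩

lemma intervalIntegrable_and_integral_phi''_le_of_lt_two_mul_norm [InnerProductSpace ℝ E]
    (hA : SatisfiesAssumption φ φ' φ'') (hc₁ : 0 < c₁) (hc₂ : 0 < c₂)
    (hequiv : ∀ t, 0 < t → c₁ * (t * φ'' t) ≤ φ' t ∧ φ' t ≤ c₂ * (t * φ'' t))
    {k : ℕ} (hk : 1 ≤ k * c₁) {z₁ z₂ : E} {μ : ℝ} (hμ : 0 ≤ μ) (hz : μ + ‖z₁‖ < 2 * ‖z₂‖) :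
    IntervalIntegrable (fun r => φ'' (μ + ‖z₁ + r • z₂‖)) volume 0 1 ∧
      ∫ r in (0 : ℝ)..1, φ'' (μ + ‖z₁ + r • z₂‖) ≤
        c₂ / c₁ * 2 ^ k * (12 * c₂) * φ'' (μ + ‖z₁‖ + ‖z₂‖) := by
  obtain ⟨⟨-, -, h0, -, -, hmono, hpos, -⟩, -, hcont', hderiv, hcont''⟩ := hA
  have hφ''pos := phi''_pos hc₂ hpos fun t ht => (hequiv t ht).2
  have hz₂ : 0 < ‖z₂‖ := by linarith [norm_nonneg z₁]
  have hP : 0 < μ + ‖z₁‖ + ‖z₂‖ := by linarith [norm_nonneg z₁]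
  obtain ⟨r₀, d, hd, hcmp⟩ := exists_norm_add_smul_le_and_le z₁ z₂
  have hβ : 0 < ‖z₂‖ / 2 := by positivity
  obtain ⟨hMi, hMle⟩ := intervalIntegrable_and_integral_phi''_abs_sub_le hcont' hderiv
    (fun t ht => (hφ''pos t ht).le) hmono h0 (by positivity : 0 ≤ (μ + d) / 2) hβ
    (c := r₀) (X := μ + ‖z₁‖ + ‖z₂‖) (by
      have := (hcmp 0).1
      rw [zero_sub, abs_neg, zero_smul, add_zero] at this
      nlinarith [norm_nonneg z₁])
  have hdom : ∀ᵐ r : ℝ, r ∈ Icc 0 1 → 0 ≤ φ'' (μ + ‖z₁ + r • z₂‖) ∧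
      φ'' (μ + ‖z₁ + r • z₂‖) ≤ c₂ / c₁ * 2 ^ k * φ'' ((μ + d) / 2 + ‖z₂‖ / 2 * |r - r₀|) := by
    filter_upwards [ae_pos_add_norm_add_smul hμ hP] with r hr _
    obtain ⟨hlow, hup⟩ := hcmp r
    refine ⟨(hφ''pos _ hr).le, phi''_le_mul_pow_phi''_of_le hc₁ hderiv hpos hequiv hk
      (by linarith) (by linarith) (by linarith)⟩
  obtain ⟨hint, hle⟩ := intervalIntegrable_and_integral_le_of_ae_le zero_le_one
    (hMi.const_mul (c₂ / c₁ * 2 ^ k))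
    ((aestronglyMeasurable_comp_of_ae_pos hcont'' (by fun_prop)
      (ae_pos_add_norm_add_smul hμ hP)).restrict) hdom
  refine ⟨hint, hle.trans ?_⟩
  have hφ' : 2 * φ' (μ + ‖z₁‖ + ‖z₂‖) / (‖z₂‖ / 2) ≤ 12 * c₂ * φ'' (μ + ‖z₁‖ + ‖z₂‖) := by
    rw [div_le_iff₀ hβ]
    nlinarith [(hequiv _ hP).2, mul_le_mul_of_nonneg_left (by linarith : μ + ‖z₁‖ + ‖z₂‖ ≤ 3 * ‖z₂‖)
      (mul_nonneg hc₂.le (hφ''pos _ hP).le)]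
  rw [intervalIntegral.integral_const_mul]
  calc c₂ / c₁ * 2 ^ k * ∫ r in (0 : ℝ)..1, φ'' ((μ + d) / 2 + ‖z₂‖ / 2 * |r - r₀|)
      ≤ c₂ / c₁ * 2 ^ k * (12 * c₂ * φ'' (μ + ‖z₁‖ + ‖z₂‖)) :=
        mul_le_mul_of_nonneg_left (hMle.trans hφ') (by positivity)
    _ = c₂ / c₁ * 2 ^ k * (12 * c₂) * φ'' (μ + ‖z₁‖ + ‖z₂‖) := by ring

lemma intervalIntegrable_and_integral_phi''_le [InnerProductSpace ℝ E]
    (hA : SatisfiesAssumption φ φ' φ'') (hc₁ : 0 < c₁) (hc₂ : 0 < c₂)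
    (hequiv : ∀ t, 0 < t → c₁ * (t * φ'' t) ≤ φ' t ∧ φ' t ≤ c₂ * (t * φ'' t))
    {k : ℕ} (hk : 1 ≤ k * c₁) {z₁ z₂ : E} {μ : ℝ} (hμ : 0 ≤ μ) (hP : 0 < μ + ‖z₁‖ + ‖z₂‖) :
    IntervalIntegrable (fun r => φ'' (μ + ‖z₁ + r • z₂‖)) volume 0 1 ∧
      ∫ r in (0 : ℝ)..1, φ'' (μ + ‖z₁ + r • z₂‖) ≤
        (3 * (c₂ / c₁) + c₂ / c₁ * 2 ^ k * (12 * c₂)) * φ'' (μ + ‖z₁‖ + ‖z₂‖) := by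
  have hpos : ∀ t, 0 < t → 0 < φ' t := hA.1.2.2.2.2.2.2.1
  have hP'' := (phi''_pos hc₂ hpos (fun t ht => (hequiv t ht).2) _ hP).le
  rcases le_or_gt (2 * ‖z₂‖) (μ + ‖z₁‖) with hz | hz
  · obtain ⟨hint, hle⟩ :=
      intervalIntegrable_and_integral_phi''_le_of_two_mul_norm_le hA hc₁ hc₂ hequiv hμ hP hz
    exact ⟨hint, hle.trans (by gcongr; exact le_add_of_nonneg_right (by positivity))⟩
  · obtain ⟨hint, hle⟩ :=
      intervalIntegrable_and_integral_phi''_le_of_lt_two_mul_norm hA hc₁ hc₂ hequiv hk hμ hz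
    exact ⟨hint, hle.trans (by gcongr; exact le_add_of_nonneg_left (by positivity))⟩

lemma mul_phi''_le_integral [NormedSpace ℝ E]
    (hA : SatisfiesAssumption φ φ' φ'') (hc₁ : 0 < c₁) (hc₂ : 0 < c₂)
    (hequiv : ∀ t, 0 < t → c₁ * (t * φ'' t) ≤ φ' t ∧ φ' t ≤ c₂ * (t * φ'' t))
    {k : ℕ} (hk : 1 ≤ k * c₁) {z₁ z₂ : E} {μ : ℝ} (hμ : 0 ≤ μ) (hP : 0 < μ + ‖z₁‖ + ‖z₂‖)
    (hint : IntervalIntegrable (fun r => φ'' (μ + ‖z₁ + r • z₂‖)) volume 0 (1 / 2)) :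
    c₁ / c₂ / 10 ^ k / 8 * φ'' (μ + ‖z₁‖ + ‖z₂‖) ≤
      ∫ r in (0 : ℝ)..1 / 2, φ'' (μ + ‖z₁ + r • z₂‖) := by
  obtain ⟨⟨-, -, -, -, -, -, hpos, -⟩, -, -, hderiv, -⟩ := hA
  have hφ''pos := phi''_pos hc₂ hpos fun t ht => (hequiv t ht).2
  obtain ⟨p, hp0, hp, hfar⟩ := exists_norm_add_norm_le_ten_mul_norm_add_smul z₁ z₂
  have hbound : ∀ r ∈ Icc p (p + 1 / 8),
      c₁ / c₂ / 10 ^ k * φ'' (μ + ‖z₁‖ + ‖z₂‖) ≤ φ'' (μ + ‖z₁ + r • z₂‖) := fun r hr => by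
    have hfar := hfar r hr
    have hup := (abs_norm_sub_le_norm_add_smul_and_le z₁ z₂ (hp0.trans hr.1)).2
    have hx : 0 < μ + ‖z₁ + r • z₂‖ := by linarith
    have hr₁ : r * ‖z₂‖ ≤ ‖z₂‖ := mul_le_of_le_one_left (norm_nonneg _) (by linarith [hr.2])
    have := phi''_le_mul_pow_phi''_of_le hc₁ hderiv hpos hequiv hk (K := 10)
      (y := μ + ‖z₁‖ + ‖z₂‖) hx (by linarith) (by linarith)
    rw [div_div, div_mul_eq_mul_div, div_le_iff₀ (by positivity)]
    calc c₁ * φ'' (μ + ‖z₁‖ + ‖z₂‖) ≤ c₁ * (c₂ / c₁ * 10 ^ k * φ'' (μ + ‖z₁ + r • z₂‖)) :=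
          mul_le_mul_of_nonneg_left this hc₁.le
      _ = φ'' (μ + ‖z₁ + r • z₂‖) * (c₂ * 10 ^ k) := by field_simp
  have hsub : uIcc p (p + 1 / 8) ⊆ uIcc 0 (1 / 2) := by
    rw [uIcc_of_le (by linarith), uIcc_of_le (by norm_num)]
    exact Icc_subset_Icc hp0 hp
  have hnn : ∀ᵐ r : ℝ ∂volume.restrict (Ioc 0 (1 / 2)), 0 ≤ φ'' (μ + ‖z₁ + r • z₂‖) :=
    ae_restrict_of_ae ((ae_pos_add_norm_add_smul hμ hP).mono fun r hr => (hφ''pos _ hr).le)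
  calc c₁ / c₂ / 10 ^ k / 8 * φ'' (μ + ‖z₁‖ + ‖z₂‖)
      = ∫ _ in p..p + 1 / 8, c₁ / c₂ / 10 ^ k * φ'' (μ + ‖z₁‖ + ‖z₂‖) := by simp; ring
    _ ≤ ∫ r in p..p + 1 / 8, φ'' (μ + ‖z₁ + r • z₂‖) :=
        intervalIntegral.integral_mono_on (by linarith) intervalIntegrable_const
          (hint.mono_set hsub) hbound
    _ ≤ ∫ r in (0 : ℝ)..1 / 2, φ'' (μ + ‖z₁ + r • z₂‖) :=
        intervalIntegral.integral_mono_interval hp0 (by linarith) hp hnn hint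

end Profile

/-- Under the Assumption (`φ'(t) ∼ t·φ''(t)`):
`∫₀¹∫₀¹ t·φ''(μ+|z₁+stz₂|) ds dt ∼ φ''(μ+|z₁|+|z₂|)`. -/
theorem double_integral_phi'' (φ φ' φ'' : ℝ → ℝ) (hA : SatisfiesAssumption φ φ' φ'')
    (c₁ c₂ : ℝ) (hc₁ : 0 < c₁) (hc₂ : 0 < c₂)
    (hequiv : ∀ t : ℝ, 0 < t → c₁ * (t * φ'' t) ≤ φ' t ∧ φ' t ≤ c₂ * (t * φ'' t)) :
    ∃ C₁ C₂ : ℝ, 0 < C₁ ∧ 0 < C₂ ∧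
      ∀ (N n : ℕ) (z₁ z₂ : EuclideanSpace ℝ (Fin (N * n))) (μ : ℝ),
        0 ≤ μ → 0 < ‖z₁‖ + ‖z₂‖ →
        C₁ * φ'' (μ + ‖z₁‖ + ‖z₂‖) ≤
          (∫ t in (0:ℝ)..1, ∫ s in (0:ℝ)..1, t * φ'' (μ + ‖z₁ + (s * t) • z₂‖)) ∧
        (∫ t in (0:ℝ)..1, ∫ s in (0:ℝ)..1, t * φ'' (μ + ‖z₁ + (s * t) • z₂‖)) ≤
          C₂ * φ'' (μ + ‖z₁‖ + ‖z₂‖) := by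
  obtain ⟨k, hk⟩ : ∃ k : ℕ, 1 ≤ k * c₁ :=
    ⟨⌈c₁⁻¹⌉₊, by simpa [hc₁.ne'] using mul_le_mul_of_nonneg_right (Nat.le_ceil c₁⁻¹) hc₁.le⟩
  refine ⟨c₁ / c₂ / 10 ^ k / 8 / 2, 3 * (c₂ / c₁) + c₂ / c₁ * 2 ^ k * (12 * c₂),
    by positivity, by positivity, fun N n z₁ z₂ μ hμ hz => ?_⟩
  have hP : 0 < μ + ‖z₁‖ + ‖z₂‖ := by linarith
  obtain ⟨hint, hupper⟩ := intervalIntegrable_and_integral_phi''_le hA hc₁ hc₂ hequiv hk hμ hP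
  have hlower := mul_phi''_le_integral hA hc₁ hc₂ hequiv hk hμ hP
    (hint.mono_set (uIcc_subset_uIcc left_mem_uIcc (by rw [uIcc_of_le zero_le_one]; norm_num)))
  have hpos : ∀ t, 0 < t → 0 < φ' t := hA.1.2.2.2.2.2.2.1
  have hnn : ∀ᵐ r : ℝ, 0 ≤ φ'' (μ + ‖z₁ + r • z₂‖) :=
    (ae_pos_add_norm_add_smul hμ hP).mono fun r hr =>
      (phi''_pos hc₂ hpos (fun t ht => (hequiv t ht).2) _ hr).le
  obtain ⟨hlo, hhi⟩ := integral_integral_mul_comp_mul_bounds hint hnn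
  exact ⟨by linarith, hhi.trans hupper⟩
end

section
/- Let φ be an N-function of class C¹([0,∞)) ∩ C²((0,∞)) with φ'(t) ∼ t·φ''(t) uniformly in t > 0. Define Φ: ℝ^{Nn} → ℝ by Φ(z) = φ(√(1+|z|²)). Then there exist constants c₁, c₂ > 0 such that for all y, z ∈ ℝ^{Nn}: c₁·φ''(√(1+|z+y|²))·|y|² ≤ (D²Φ(z+y) y, y) ≤ c₂·φ''(√(1+|z+y|²))·|y|². -/
/-! With `r = √(1 + |w|²)`, the Hessian of `Φ` at `w` is `φ''(r)` in the radial direction `w`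
and `φ'(r)/r` on its orthogonal complement. Hence `(D²Φ(w) y, y) = φ''(r) s + (φ'(r)/r) (|y|² - s)`
with `s = (w·y / r)² ∈ [0, |y|²]` by Cauchy–Schwarz and `|w| ≤ r`. The hypothesis
`φ'(t) ∼ t φ''(t)` makes both coefficients comparable to `φ''(r)`, so the form lies between
`min 1 c · φ''(r) |y|²` and `max 1 c' · φ''(r) |y|²`. -/

open MeasureTheory Real Filter

open scoped RealInnerProductSpace

section SqrtOneAddNormSq

variable {E : Type*} [NormedAddCommGroup E] [InnerProductSpace ℝ E]

lemma hasFDerivAt_sqrt_one_add_norm_sq (z : E) :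
    HasFDerivAt (fun z : E => √(1 + ‖z‖ ^ 2)) ((√(1 + ‖z‖ ^ 2))⁻¹ • innerSL ℝ z) z := by
  have h := ((hasStrictFDerivAt_norm_sq z).hasFDerivAt.const_add 1).sqrt (by positivity)
  convert h using 1
  ext y
  simp only [smul_apply, smul_eq_mul, nsmul_eq_mul, Nat.cast_ofNat, innerSL_apply_apply]
  field_simp

lemma HasDerivAt.comp_sqrt_one_add_norm_sq {g : ℝ → ℝ} {g' : ℝ} {z : E}
    (hg : HasDerivAt g g' √(1 + ‖z‖ ^ 2)) :
    HasFDerivAt (fun z : E => g √(1 + ‖z‖ ^ 2)) ((g' / √(1 + ‖z‖ ^ 2)) • innerSL ℝ z) z := by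
  have h := hg.comp_hasFDerivAt z (hasFDerivAt_sqrt_one_add_norm_sq z)
  rwa [smul_smul, ← div_eq_mul_inv] at h

lemma sq_inner_div_sqrt_one_add_norm_sq_le (w y : E) :
    (⟪w, y⟫ / √(1 + ‖w‖ ^ 2)) ^ 2 ≤ ‖y‖ ^ 2 := by
  rw [div_pow, div_le_iff₀ (by positivity), Real.sq_sqrt (by positivity)]
  calc ⟪w, y⟫ ^ 2 ≤ (‖w‖ * ‖y‖) ^ 2 := by
        simpa only [sq_abs] using pow_le_pow_left₀ (abs_nonneg _) (abs_real_inner_le_norm w y) 2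
    _ ≤ ‖y‖ ^ 2 * (1 + ‖w‖ ^ 2) := by nlinarith [sq_nonneg ‖y‖]

variable {φ φ' φ'' : ℝ → ℝ}

lemma fderiv_comp_sqrt_one_add_norm_sq (hφ : ∀ t > 0, HasDerivAt φ (φ' t) t) :
    fderiv ℝ (fun z : E => φ √(1 + ‖z‖ ^ 2)) =
      fun z => (φ' √(1 + ‖z‖ ^ 2) / √(1 + ‖z‖ ^ 2)) • innerSL ℝ z :=
  funext fun z => (hφ _ (by positivity)).comp_sqrt_one_add_norm_sq.fderiv

lemma fderiv_fderiv_comp_sqrt_one_add_norm_sq_apply (hφ : ∀ t > 0, HasDerivAt φ (φ' t) t)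
    (hφ' : ∀ t > 0, HasDerivAt φ' (φ'' t) t) (w y : E) :
    fderiv ℝ (fderiv ℝ fun z : E => φ √(1 + ‖z‖ ^ 2)) w y y =
      φ'' √(1 + ‖w‖ ^ 2) * (⟪w, y⟫ / √(1 + ‖w‖ ^ 2)) ^ 2 +
        φ' √(1 + ‖w‖ ^ 2) / √(1 + ‖w‖ ^ 2) * (‖y‖ ^ 2 - (⟪w, y⟫ / √(1 + ‖w‖ ^ 2)) ^ 2) := by
  have hr : 0 < √(1 + ‖w‖ ^ 2) := by positivity
  have hquot : HasDerivAt (fun t => φ' t / t)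
      ((φ'' √(1 + ‖w‖ ^ 2) * √(1 + ‖w‖ ^ 2) - φ' √(1 + ‖w‖ ^ 2) * 1) / √(1 + ‖w‖ ^ 2) ^ 2)
      √(1 + ‖w‖ ^ 2) :=
    (hφ' _ hr).div (hasDerivAt_id _) hr.ne'
  have h : HasFDerivAt (fun z : E => (φ' √(1 + ‖z‖ ^ 2) / √(1 + ‖z‖ ^ 2)) • innerSL ℝ z) _ w :=
    hquot.comp_sqrt_one_add_norm_sq.smul (innerSL ℝ).hasFDerivAt
  rw [fderiv_comp_sqrt_one_add_norm_sq hφ, h.fderiv]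
  simp only [add_apply, smul_apply, ContinuousLinearMap.smulRight_apply,
    innerSL_apply_apply, smul_eq_mul]
  rw [show innerSL ℝ y y = ‖y‖ ^ 2 from real_inner_self_eq_norm_sq y]
  field_simp
  ring

end SqrtOneAddNormSq

lemma mul_add_mul_sub_mem_Icc {a b m M s Y : ℝ} (hs : s ∈ Set.Icc 0 Y)
    (ha : a ∈ Set.Icc m M) (hb : b ∈ Set.Icc m M) :
    a * s + b * (Y - s) ∈ Set.Icc (m * Y) (M * Y) := by
  obtain ⟨hs₀, hsY⟩ := hs
  have hYs : 0 ≤ Y - s := sub_nonneg.2 hsY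
  constructor
  · linarith [mul_le_mul_of_nonneg_right ha.1 hs₀, mul_le_mul_of_nonneg_right hb.1 hYs]
  · linarith [mul_le_mul_of_nonneg_right ha.2 hs₀, mul_le_mul_of_nonneg_right hb.2 hYs]

/-- Under the Assumption, with `Φ(z) = φ(√(1+|z|²))`:
`(D²Φ(z+y) y, y) ∼ φ''(√(1+|z+y|²))·|y|²`. -/
theorem hessian_sqrt_equiv (φ φ' φ'' : ℝ → ℝ) (hA : SatisfiesAssumption φ φ' φ'')
    (c c' : ℝ) (hc : 0 < c) (hc' : 0 < c')
    (hequiv : ∀ t : ℝ, 0 < t → c * (t * φ'' t) ≤ φ' t ∧ φ' t ≤ c' * (t * φ'' t))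
    (N n : ℕ) (Φ : EuclideanSpace ℝ (Fin (N * n)) → ℝ)
    (hΦ : ∀ z, Φ z = φ (Real.sqrt (1 + ‖z‖ ^ 2))) :
    ∃ c₁ c₂ : ℝ, 0 < c₁ ∧ 0 < c₂ ∧
      ∀ y z : EuclideanSpace ℝ (Fin (N * n)),
        c₁ * (φ'' (Real.sqrt (1 + ‖z + y‖ ^ 2)) * ‖y‖ ^ 2) ≤
          fderiv ℝ (fderiv ℝ Φ) (z + y) y y ∧
        fderiv ℝ (fderiv ℝ Φ) (z + y) y y ≤
          c₂ * (φ'' (Real.sqrt (1 + ‖z + y‖ ^ 2)) * ‖y‖ ^ 2) := by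
  obtain ⟨⟨-, -, -, -, -, -, hφ'_pos, -⟩, hφ_deriv, -, hφ'_deriv, -⟩ := hA
  have hφ : ∀ t > 0, HasDerivAt φ (φ' t) t := fun t ht =>
    (hφ_deriv t ht.le).hasDerivAt (Ici_mem_nhds ht)
  obtain rfl : Φ = _ := funext hΦ
  refine ⟨min 1 c, max 1 c', lt_min one_pos hc, lt_max_of_lt_left one_pos, fun y z => ?_⟩
  set r := √(1 + ‖z + y‖ ^ 2)
  have hr : 0 < r := by positivity
  obtain ⟨hlow, hhigh⟩ := hequiv r hr
  have hφ''_pos : 0 < φ'' r :=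
    pos_of_mul_pos_right (pos_of_mul_pos_right ((hφ'_pos r hr).trans_le hhigh) hc'.le) hr.le
  have hratio : φ' r / r ∈ Set.Icc (min 1 c * φ'' r) (max 1 c' * φ'' r) := by
    rw [Set.mem_Icc, le_div_iff₀ hr, div_le_iff₀ hr]
    have hpr : 0 ≤ φ'' r * r := by positivity
    constructor
    · linarith [mul_le_mul_of_nonneg_right (min_le_right 1 c) hpr]
    · linarith [mul_le_mul_of_nonneg_right (le_max_right 1 c') hpr]
  have hφ'' : φ'' r ∈ Set.Icc (min 1 c * φ'' r) (max 1 c' * φ'' r) :=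
    ⟨mul_le_of_le_one_left hφ''_pos.le (min_le_left 1 c),
      le_mul_of_one_le_left hφ''_pos.le (le_max_left 1 c')⟩
  rw [fderiv_fderiv_comp_sqrt_one_add_norm_sq_apply hφ hφ'_deriv, ← mul_assoc, ← mul_assoc]
  exact mul_add_mul_sub_mem_Icc ⟨sq_nonneg _, sq_inner_div_sqrt_one_add_norm_sq_le _ _⟩ hφ'' hratio
end

section
/- Let φ be an N-function of class C¹([0,∞)) ∩ C²((0,∞)) with φ'(t) ∼ t·φ''(t) uniformly in t > 0, and let A(z) = φ'(|z|)·z/|z| for z ≠ 0, A(0) = 0. Then there exist constants c, C > 0 such that for all z₁, z₂ ∈ ℝ^{Nn} with |z₁| + |z₂| > 0: |A(z₁) − A(z₂)| ≤ c·φ''(|z₁| + |z₂|)·|z₁ − z₂| and (A(z₁) − A(z₂), z₁ − z₂) ≥ C·φ''(|z₁| + |z₂|)·|z₁ − z₂|². -/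
open MeasureTheory Real Filter
open scoped RealInnerProductSpace

/-!
Write `a = ‖z₁‖`, `b = ‖z₂‖`. Both estimates (the first one squared) are affine in
`t = ⟪z₁, z₂⟫ ∈ [-ab, ab]`, so it suffices to check them at `t = ±ab`, where they become the
scalar inequalities `|φ'(a) ∓ φ'(b)| ≲ φ''(a + b) |a ∓ b|` and
`(φ'(a) ∓ φ'(b)) (a ∓ b) ≳ φ''(a + b) (a ∓ b)²`.

The lower bound `d t φ''(t) ≤ φ'(t)` makes `φ'(t) t^(-1/d)` decreasing, so
`φ'(4t) ≤ 4^(1/d) φ'(t)`; with `φ'(t) ∼ t φ''(t)` this gives `φ''(ξ) ∼ φ''(s)` for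
`ξ ∈ [s/4, s]`. The mean value theorem on `[s/4, s]`, `s = a + b`, then yields the scalar bounds,
the part of `[b, a]` below `s/4` being controlled by the monotonicity of `φ'` alone.
-/

lemma antitoneOn_mul_rpow_neg_inv {f f' : ℝ → ℝ} {d : ℝ} (hd : 0 < d)
    (hf : ∀ t, 0 < t → HasDerivAt f (f' t) t) (hle : ∀ t, 0 < t → d * (t * f' t) ≤ f t) :
    AntitoneOn (fun t => f t * t ^ (-d⁻¹)) (Set.Ioi 0) := by
  refine antitoneOn_of_hasDerivWithinAt_nonpos (convex_Ioi 0)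
    (f' := fun t => f' t * t ^ (-d⁻¹) + f t * (-d⁻¹ * t ^ (-d⁻¹ - 1)))
    (fun t ht => ((hf t ht).continuousAt.mul
      (continuousAt_rpow_const t _ (Or.inl ht.ne'))).continuousWithinAt) ?_ ?_
  · intro t ht
    rw [interior_Ioi] at ht
    exact ((hf t ht).mul (hasDerivAt_rpow_const (Or.inl ht.ne'))).hasDerivWithinAt
  · intro t ht
    rw [interior_Ioi] at ht
    have ht : 0 < t := ht
    have hderiv : f' t * t ^ (-d⁻¹) + f t * (-d⁻¹ * t ^ (-d⁻¹ - 1))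
        = t ^ (-d⁻¹) / (d * t) * (d * (t * f' t) - f t) := by
      rw [rpow_sub_one ht.ne']; field_simp; ring
    rw [hderiv]
    exact mul_nonpos_of_nonneg_of_nonpos (by positivity) (by linarith [hle t ht])

lemma le_div_rpow_inv_mul {f f' : ℝ → ℝ} {d : ℝ} (hd : 0 < d)
    (hf : ∀ t, 0 < t → HasDerivAt f (f' t) t) (hle : ∀ t, 0 < t → d * (t * f' t) ≤ f t)
    {x y : ℝ} (hx : 0 < x) (hxy : x ≤ y) : f y ≤ (y / x) ^ d⁻¹ * f x := by
  have hy : 0 < y := hx.trans_le hxy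
  have h := antitoneOn_mul_rpow_neg_inv hd hf hle hx (hx.trans_le hxy) hxy
  simp only [rpow_neg hx.le, rpow_neg hy.le] at h
  calc f y = f y * (y ^ d⁻¹)⁻¹ * y ^ d⁻¹ := by field_simp
    _ ≤ f x * (x ^ d⁻¹)⁻¹ * y ^ d⁻¹ := by gcongr
    _ = (y / x) ^ d⁻¹ * f x := by rw [div_rpow hy.le hx.le]; ring

lemma Icc_div_four_subset_Ioi {s : ℝ} (hs : 0 < s) : Set.Icc (s / 4) s ⊆ Set.Ioi 0 :=
  fun _ ht => lt_of_lt_of_le (by positivity) ht.1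

lemma nonneg_of_abs_le_of_nonneg_endpoints {α β m t : ℝ} (ht : |t| ≤ m)
    (hplus : 0 ≤ α + β * m) (hminus : 0 ≤ α - β * m) : 0 ≤ α + β * t := by
  rcases le_total 0 β with hβ | hβ
  · nlinarith [neg_abs_le t]
  · nlinarith [le_abs_self t]

section InnerProductSpace

variable {E : Type*} [NormedAddCommGroup E] [InnerProductSpace ℝ E]

lemma norm_smul_sub_smul_le {p q K : ℝ} {x y : E} (hK : 0 ≤ K)
    (hsub : |p * ‖x‖ - q * ‖y‖| ≤ K * |‖x‖ - ‖y‖|)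
    (hadd : |p * ‖x‖ + q * ‖y‖| ≤ K * (‖x‖ + ‖y‖)) :
    ‖p • x - q • y‖ ≤ K * ‖x - y‖ := by
  have hlhs : ‖p • x - q • y‖ ^ 2 = (p * ‖x‖) ^ 2 + (q * ‖y‖) ^ 2 - 2 * (p * q) * ⟪x, y⟫ := by
    rw [norm_sub_sq_real, norm_smul, norm_smul, real_inner_smul_left, real_inner_smul_right,
      mul_pow, mul_pow, Real.norm_eq_abs, Real.norm_eq_abs, sq_abs, sq_abs]
    ring
  have hsub_sq : (p * ‖x‖ - q * ‖y‖) ^ 2 ≤ K ^ 2 * (‖x‖ - ‖y‖) ^ 2 := by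
    rw [← sq_abs, ← sq_abs (‖x‖ - ‖y‖), ← mul_pow]
    exact pow_le_pow_left₀ (abs_nonneg _) hsub 2
  have hadd_sq : (p * ‖x‖ + q * ‖y‖) ^ 2 ≤ K ^ 2 * (‖x‖ + ‖y‖) ^ 2 := by
    rw [← sq_abs, ← mul_pow]
    exact pow_le_pow_left₀ (abs_nonneg _) hadd 2
  have key := nonneg_of_abs_le_of_nonneg_endpoints (abs_real_inner_le_norm x y)
    (α := K ^ 2 * (‖x‖ ^ 2 + ‖y‖ ^ 2) - (p * ‖x‖) ^ 2 - (q * ‖y‖) ^ 2)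
    (β := 2 * (p * q) - 2 * K ^ 2) (by nlinarith) (by nlinarith)
  refine (pow_le_pow_iff_left₀ (norm_nonneg _) (by positivity) two_ne_zero).1 ?_
  rw [hlhs, mul_pow K, norm_sub_sq_real]
  linarith

lemma le_inner_smul_sub_smul {p q K : ℝ} {x y : E}
    (hsub : K * (‖x‖ - ‖y‖) ^ 2 ≤ (p * ‖x‖ - q * ‖y‖) * (‖x‖ - ‖y‖))
    (hadd : K * (‖x‖ + ‖y‖) ^ 2 ≤ (p * ‖x‖ + q * ‖y‖) * (‖x‖ + ‖y‖)) :
    K * ‖x - y‖ ^ 2 ≤ ⟪p • x - q • y, x - y⟫ := by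
  have hinner : ⟪p • x - q • y, x - y⟫ = p * ‖x‖ ^ 2 + q * ‖y‖ ^ 2 - (p + q) * ⟪x, y⟫ := by
    rw [inner_sub_left, inner_sub_right, inner_sub_right, real_inner_smul_left,
      real_inner_smul_left, real_inner_smul_left, real_inner_smul_left,
      real_inner_self_eq_norm_sq, real_inner_self_eq_norm_sq, real_inner_comm y x]
    ring
  have key := nonneg_of_abs_le_of_nonneg_endpoints (abs_real_inner_le_norm x y)
    (α := p * ‖x‖ ^ 2 + q * ‖y‖ ^ 2 - K * (‖x‖ ^ 2 + ‖y‖ ^ 2))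
    (β := 2 * K - p - q) (by nlinarith) (by nlinarith)
  rw [hinner, norm_sub_sq_real]
  linarith

end InnerProductSpace

structure ComparableDerivs (φ' φ'' : ℝ → ℝ) (d d' : ℝ) : Prop where
  d_pos : 0 < d
  d'_pos : 0 < d'
  map_zero : φ' 0 = 0
  pos : ∀ t, 0 < t → 0 < φ' t
  monotoneOn : MonotoneOn φ' (Set.Ici 0)
  hasDerivAt : ∀ t, 0 < t → HasDerivAt φ' (φ'' t) t
  lower : ∀ t, 0 < t → d * (t * φ'' t) ≤ φ' t
  upper : ∀ t, 0 < t → φ' t ≤ d' * (t * φ'' t)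

lemma SatisfiesAssumption.comparableDerivs {φ φ' φ'' : ℝ → ℝ} {d d' : ℝ}
    (hA : SatisfiesAssumption φ φ' φ'') (hd : 0 < d) (hd' : 0 < d')
    (hequiv : ∀ t : ℝ, 0 < t → d * (t * φ'' t) ≤ φ' t ∧ φ' t ≤ d' * (t * φ'' t)) :
    ComparableDerivs φ' φ'' d d' :=
  let ⟨⟨_, _, hzero, _, _, hmono, hpos, _⟩, _, _, hderiv, _⟩ := hA
  ⟨hd, hd', hzero, hpos, hmono, hderiv, fun t ht => (hequiv t ht).1, fun t ht => (hequiv t ht).2⟩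

namespace ComparableDerivs

open Set

variable {φ' φ'' : ℝ → ℝ} {d d' : ℝ}

lemma nonneg (h : ComparableDerivs φ' φ'' d d') {t : ℝ} (ht : 0 ≤ t) : 0 ≤ φ' t := by
  rcases ht.eq_or_lt with rfl | ht
  · exact h.map_zero.ge
  · exact (h.pos t ht).le

lemma mono (h : ComparableDerivs φ' φ'' d d') {x y : ℝ} (hx : 0 ≤ x) (hxy : x ≤ y) :
    φ' x ≤ φ' y :=
  h.monotoneOn hx (hx.trans hxy : (0 : ℝ) ≤ y) hxy

lemma div_mul_self (h : ComparableDerivs φ' φ'' d d') (t : ℝ) : φ' t / t * t = φ' t :=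
  div_mul_cancel_of_imp fun ht => by rw [ht, h.map_zero]

lemma second_pos (h : ComparableDerivs φ' φ'' d d') {t : ℝ} (ht : 0 < t) : 0 < φ'' t := by
  have := (h.pos t ht).trans_le (h.upper t ht)
  exact pos_of_mul_pos_right (pos_of_mul_pos_right this h.d'_pos.le) ht.le

lemma second_le (h : ComparableDerivs φ' φ'' d d') {ξ s : ℝ} (hξ : 0 < ξ) (hξs : ξ ≤ s)
    (hsξ : s ≤ 4 * ξ) : φ'' ξ ≤ 4 * d' / d * φ'' s := by
  have hs : 0 < s := hξ.trans_le hξs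
  have hd := h.d_pos
  have hchain : d * (ξ * φ'' ξ) ≤ d' * (s * φ'' s) :=
    (h.lower ξ hξ).trans ((h.mono hξ.le hξs).trans (h.upper s hs))
  have hs4 : d' * (s * φ'' s) ≤ d' * (4 * ξ * φ'' s) := by
    have := h.second_pos hs; have := h.d'_pos; gcongr
  rw [div_mul_eq_mul_div, le_div_iff₀ hd]
  nlinarith

lemma le_second (h : ComparableDerivs φ' φ'' d d') {ξ s : ℝ} (hξ : 0 < ξ) (hξs : ξ ≤ s)
    (hsξ : s ≤ 4 * ξ) : d / (d' * 4 ^ d⁻¹) * φ'' s ≤ φ'' ξ := by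
  have hs : 0 < s := hξ.trans_le hξs
  have hd := h.d_pos
  have hd' := h.d'_pos
  have hgrowth : φ' s ≤ 4 ^ d⁻¹ * φ' ξ := by
    refine (le_div_rpow_inv_mul hd h.hasDerivAt h.lower hξ hξs).trans ?_
    have := h.pos ξ hξ
    gcongr
    rwa [div_le_iff₀ hξ]
  have hchain : d * (s * φ'' s) ≤ 4 ^ d⁻¹ * (d' * (s * φ'' ξ)) := by
    have hupper : d' * (ξ * φ'' ξ) ≤ d' * (s * φ'' ξ) := by
      have := h.second_pos hξ; gcongr
    calc d * (s * φ'' s) ≤ φ' s := h.lower s hs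
      _ ≤ 4 ^ d⁻¹ * φ' ξ := hgrowth
      _ ≤ 4 ^ d⁻¹ * (d' * (s * φ'' ξ)) := by gcongr; exact (h.upper ξ hξ).trans hupper
  rw [div_mul_eq_mul_div, div_le_iff₀ (by positivity)]
  nlinarith

lemma differentiableOn (h : ComparableDerivs φ' φ'' d d') : DifferentiableOn ℝ φ' (Ioi 0) :=
  fun t ht => (h.hasDerivAt t ht).differentiableAt.differentiableWithinAt

lemma sub_le_mul_sub (h : ComparableDerivs φ' φ'' d d') {s x y : ℝ} (hs : 0 < s)
    (hx : s / 4 ≤ x) (hxy : x ≤ y) (hy : y ≤ s) :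
    φ' y - φ' x ≤ 4 * d' / d * φ'' s * (y - x) := by
  refine (convex_Icc (s / 4) s).image_sub_le_mul_sub_of_deriv_le
    (h.differentiableOn.continuousOn.mono (Icc_div_four_subset_Ioi hs))
    (h.differentiableOn.mono (interior_subset.trans (Icc_div_four_subset_Ioi hs))) ?_
    x ⟨hx, hxy.trans hy⟩ y ⟨hx.trans hxy, hy⟩ hxy
  intro ξ hξ
  rw [interior_Icc] at hξ
  have hξ₀ : 0 < ξ := Icc_div_four_subset_Ioi hs (Ioo_subset_Icc_self hξ)
  rw [(h.hasDerivAt ξ hξ₀).deriv]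
  exact h.second_le hξ₀ hξ.2.le (by linarith [hξ.1])

lemma mul_sub_le_sub (h : ComparableDerivs φ' φ'' d d') {s x y : ℝ} (hs : 0 < s)
    (hx : s / 4 ≤ x) (hxy : x ≤ y) (hy : y ≤ s) :
    d / (d' * 4 ^ d⁻¹) * φ'' s * (y - x) ≤ φ' y - φ' x := by
  refine (convex_Icc (s / 4) s).mul_sub_le_image_sub_of_le_deriv
    (h.differentiableOn.continuousOn.mono (Icc_div_four_subset_Ioi hs))
    (h.differentiableOn.mono (interior_subset.trans (Icc_div_four_subset_Ioi hs))) ?_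
    x ⟨hx, hxy.trans hy⟩ y ⟨hx.trans hxy, hy⟩ hxy
  intro ξ hξ
  rw [interior_Icc] at hξ
  have hξ₀ : 0 < ξ := Icc_div_four_subset_Ioi hs (Ioo_subset_Icc_self hξ)
  rw [(h.hasDerivAt ξ hξ₀).deriv]
  exact h.le_second hξ₀ hξ.2.le (by linarith [hξ.1])

lemma sub_le_of_le (h : ComparableDerivs φ' φ'' d d') {a b : ℝ} (hb : 0 ≤ b) (hba : b ≤ a)
    (hab : 0 < a + b) :
    φ' a - φ' b ≤ (2 * d' + 4 * d' / d) * φ'' (a + b) * (a - b) := by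
  have hF := (h.second_pos hab).le
  have := h.d_pos
  have := h.d'_pos
  by_cases hb4 : (a + b) / 4 ≤ b
  · calc φ' a - φ' b ≤ 4 * d' / d * φ'' (a + b) * (a - b) :=
          h.sub_le_mul_sub hab hb4 hba (by linarith)
      _ ≤ (2 * d' + 4 * d' / d) * φ'' (a + b) * (a - b) := by
          gcongr
          linarith
  · calc φ' a - φ' b ≤ φ' (a + b) := by
          linarith [h.nonneg hb, h.mono (hb.trans hba) (le_add_of_nonneg_right hb)]
      _ ≤ d' * ((a + b) * φ'' (a + b)) := h.upper _ hab
      _ ≤ d' * (2 * (a - b) * φ'' (a + b)) := by gcongr; linarith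
      _ ≤ (2 * d' + 4 * d' / d) * φ'' (a + b) * (a - b) := by
          have : 0 ≤ 4 * d' / d * φ'' (a + b) * (a - b) := by
            have : 0 ≤ a - b := by linarith
            positivity
          linarith

lemma abs_sub_le (h : ComparableDerivs φ' φ'' d d') {a b : ℝ} (ha : 0 ≤ a) (hb : 0 ≤ b)
    (hab : 0 < a + b) :
    |φ' a - φ' b| ≤ (2 * d' + 4 * d' / d) * φ'' (a + b) * |a - b| := by
  wlog hba : b ≤ a generalizing a b
  · rw [abs_sub_comm, abs_sub_comm a, add_comm a]
    exact this hb ha (by linarith) (by linarith)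
  rw [abs_of_nonneg (sub_nonneg.2 (h.mono hb hba)), abs_of_nonneg (sub_nonneg.2 hba)]
  exact h.sub_le_of_le hb hba hab

lemma abs_add_le (h : ComparableDerivs φ' φ'' d d') {a b : ℝ} (ha : 0 ≤ a) (hb : 0 ≤ b)
    (hab : 0 < a + b) :
    |φ' a + φ' b| ≤ (2 * d' + 4 * d' / d) * φ'' (a + b) * (a + b) := by
  have hF := (h.second_pos hab).le
  have := h.d_pos
  have := h.d'_pos
  rw [abs_of_nonneg (add_nonneg (h.nonneg ha) (h.nonneg hb))]
  calc φ' a + φ' b ≤ 2 * φ' (a + b) := by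
        linarith [h.mono ha (le_add_of_nonneg_right hb), h.mono hb (le_add_of_nonneg_left ha)]
    _ ≤ 2 * (d' * ((a + b) * φ'' (a + b))) := by gcongr; exact h.upper _ hab
    _ ≤ (2 * d' + 4 * d' / d) * φ'' (a + b) * (a + b) := by
        have : 0 ≤ 4 * d' / d * φ'' (a + b) * (a + b) := by positivity
        linarith

lemma mul_sub_le_sub_of_le (h : ComparableDerivs φ' φ'' d d') {a b : ℝ} (hb : 0 ≤ b)
    (hba : b ≤ a) (hab : 0 < a + b) :
    d / (d' * 4 ^ d⁻¹) / 4 * φ'' (a + b) * (a - b) ≤ φ' a - φ' b := by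
  set κ := d / (d' * 4 ^ d⁻¹)
  have hκF : 0 ≤ κ * φ'' (a + b) := by
    have := h.d_pos; have := h.d'_pos; have := h.second_pos hab; positivity
  by_cases hb4 : (a + b) / 4 ≤ b
  · calc κ / 4 * φ'' (a + b) * (a - b) = κ * φ'' (a + b) * ((a - b) / 4) := by ring
      _ ≤ κ * φ'' (a + b) * (a - b) := mul_le_mul_of_nonneg_left (by linarith) hκF
      _ ≤ φ' a - φ' b := h.mul_sub_le_sub hab hb4 hba (by linarith)
  · calc κ / 4 * φ'' (a + b) * (a - b) = κ * φ'' (a + b) * ((a - b) / 4) := by ring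
      _ ≤ κ * φ'' (a + b) * (a - (a + b) / 4) := mul_le_mul_of_nonneg_left (by linarith) hκF
      _ ≤ φ' a - φ' ((a + b) / 4) := h.mul_sub_le_sub hab le_rfl (by linarith) (by linarith)
      _ ≤ φ' a - φ' b := by linarith [h.mono hb (not_le.1 hb4).le]

lemma mul_add_le_add_of_le (h : ComparableDerivs φ' φ'' d d') {a b : ℝ} (hb : 0 ≤ b)
    (hba : b ≤ a) (hab : 0 < a + b) :
    d / (d' * 4 ^ d⁻¹) / 4 * φ'' (a + b) * (a + b) ≤ φ' a + φ' b := by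
  set κ := d / (d' * 4 ^ d⁻¹)
  have hκF : 0 ≤ κ * φ'' (a + b) := by
    have := h.d_pos; have := h.d'_pos; have := h.second_pos hab; positivity
  calc κ / 4 * φ'' (a + b) * (a + b) = κ * φ'' (a + b) * ((a + b) / 4) := by ring
    _ ≤ κ * φ'' (a + b) * (a - (a + b) / 4) := mul_le_mul_of_nonneg_left (by linarith) hκF
    _ ≤ φ' a - φ' ((a + b) / 4) := h.mul_sub_le_sub hab le_rfl (by linarith) (by linarith)
    _ ≤ φ' a + φ' b := by linarith [h.nonneg (by positivity : 0 ≤ (a + b) / 4), h.nonneg hb]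

lemma mul_sq_sub_le (h : ComparableDerivs φ' φ'' d d') {a b : ℝ} (ha : 0 ≤ a) (hb : 0 ≤ b)
    (hab : 0 < a + b) :
    d / (d' * 4 ^ d⁻¹) / 4 * φ'' (a + b) * (a - b) ^ 2 ≤ (φ' a - φ' b) * (a - b) := by
  wlog hba : b ≤ a generalizing a b
  · have := this hb ha (by linarith) (by linarith)
    rw [add_comm b a] at this
    convert this using 1 <;> ring
  rw [sq, ← mul_assoc]
  exact mul_le_mul_of_nonneg_right (h.mul_sub_le_sub_of_le hb hba hab) (sub_nonneg.2 hba)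

lemma mul_sq_add_le (h : ComparableDerivs φ' φ'' d d') {a b : ℝ} (ha : 0 ≤ a) (hb : 0 ≤ b)
    (hab : 0 < a + b) :
    d / (d' * 4 ^ d⁻¹) / 4 * φ'' (a + b) * (a + b) ^ 2 ≤ (φ' a + φ' b) * (a + b) := by
  wlog hba : b ≤ a generalizing a b
  · have := this hb ha (by linarith) (by linarith)
    rw [add_comm b a, add_comm (φ' b)] at this
    exact this
  rw [sq, ← mul_assoc]
  exact mul_le_mul_of_nonneg_right (h.mul_add_le_add_of_le hb hba hab) hab.le

end ComparableDerivs

/-- Under the Assumption, with `A(z) = φ'(|z|)·z/|z|`, `A(0) = 0`: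
Lipschitz-type and monotonicity estimates for `A`. -/
theorem A_estimates (φ φ' φ'' : ℝ → ℝ) (hA : SatisfiesAssumption φ φ' φ'')
    (d d' : ℝ) (hd : 0 < d) (hd' : 0 < d')
    (hequiv : ∀ t : ℝ, 0 < t → d * (t * φ'' t) ≤ φ' t ∧ φ' t ≤ d' * (t * φ'' t))
    (N n : ℕ) (A : EuclideanSpace ℝ (Fin (N * n)) → EuclideanSpace ℝ (Fin (N * n)))
    (hA0 : A 0 = 0) (hAz : ∀ z, z ≠ 0 → A z = (φ' ‖z‖ / ‖z‖) • z) :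
    ∃ c C : ℝ, 0 < c ∧ 0 < C ∧
      ∀ z₁ z₂ : EuclideanSpace ℝ (Fin (N * n)), 0 < ‖z₁‖ + ‖z₂‖ →
        ‖A z₁ - A z₂‖ ≤ c * (φ'' (‖z₁‖ + ‖z₂‖) * ‖z₁ - z₂‖) ∧
        C * (φ'' (‖z₁‖ + ‖z₂‖) * ‖z₁ - z₂‖ ^ 2) ≤ @inner ℝ _ _ (A z₁ - A z₂) (z₁ - z₂) := by
  have h := hA.comparableDerivs hd hd' hequiv
  have hA_eq (z) : A z = (φ' ‖z‖ / ‖z‖) • z := by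
    rcases eq_or_ne z 0 with rfl | hz
    · rw [hA0, smul_zero]
    · exact hAz z hz
  refine ⟨2 * d' + 4 * d' / d, d / (d' * 4 ^ d⁻¹) / 4, by positivity, by positivity,
    fun z₁ z₂ hz => ?_⟩
  have hF := (h.second_pos hz).le
  rw [hA_eq, hA_eq, ← mul_assoc, ← mul_assoc]
  constructor
  · refine norm_smul_sub_smul_le (by positivity) ?_ ?_ <;> rw [h.div_mul_self, h.div_mul_self]
    · exact h.abs_sub_le (norm_nonneg _) (norm_nonneg _) hz
    · exact h.abs_add_le (norm_nonneg _) (norm_nonneg _) hz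
  · refine le_inner_smul_sub_smul ?_ ?_ <;> rw [h.div_mul_self, h.div_mul_self]
    · exact h.mul_sq_sub_le (norm_nonneg _) (norm_nonneg _) hz
    · exact h.mul_sq_add_le (norm_nonneg _) (norm_nonneg _) hz
end

section
/- Let φ be an N-function satisfying Assumption (φ ∈ C¹([0,∞)) ∩ C²((0,∞)) and φ'(t) ∼ t·φ''(t)). Define the shifted function φ_a for a ≥ 0 by φ_a(t) = ∫₀ᵗ φ'(a+s)·s/(a+s) ds. Then for t ≥ a one has φ_a(t) ∼ φ(t), and for 0 ≤ t ≤ a one has φ_a(t) ∼ t²·φ''(a), with constants independent of a and t. -/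
open MeasureTheory Real Filter

/-- The shifted N-function `φ_a(t) = ∫₀ᵗ φ'(a+s)·s/(a+s) ds`. -/
noncomputable def shiftedPhi (φ' : ℝ → ℝ) (a t : ℝ) : ℝ :=
  ∫ s in (0:ℝ)..t, φ' (a + s) * s / (a + s)

/-! The lower half `d t φ''(t) ≤ φ'(t)` of the Assumption makes `φ'(t) t^(-1/d)` antitone, so `φ'`
is doubling: `φ'(2x) ≤ 2^(1/d) φ'(x)`. Both `φ'` and the integrand `φ'(a+s) s/(a+s)` of `φ_a` are
monotone, so their integrals over `[0, t]` lie between `t/2` times their value at `t/2` and `t`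
times their value at `t`. For `t ≥ a` doubling then compares `φ(t)` and `φ_a(t)` with `t φ'(t)`. For
`t ≤ a` the integrand lies between `φ'(a) s/(2a)` and `φ'(2a) s/a`, so `φ_a(t) ∼ t² φ'(a)/a`, which
is `∼ t² φ''(a)` by the Assumption. -/

theorem antitoneOn_mul_rpow_neg {f f' : ℝ → ℝ} {p : ℝ}
    (hf : ∀ t, 0 < t → HasDerivAt f (f' t) t) (hp : ∀ t, 0 < t → t * f' t ≤ p * f t) :
    AntitoneOn (fun t => f t * t ^ (-p)) (Set.Ioi 0) := by
  have hderiv : ∀ t, 0 < t →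
      HasDerivAt (fun t => f t * t ^ (-p)) ((t * f' t - p * f t) * t ^ (-p - 1)) t := by
    intro t ht
    refine ((hf t ht).mul (Real.hasDerivAt_rpow_const (p := -p) (Or.inl ht.ne'))).congr_deriv ?_
    rw [show t ^ (-p) = t * t ^ (-p - 1) by
      rw [mul_comm, ← Real.rpow_add_one ht.ne', sub_add_cancel]]
    ring
  refine antitoneOn_of_hasDerivWithinAt_nonpos (f' := fun t => (t * f' t - p * f t) * t ^ (-p - 1))
    (convex_Ioi 0)
    (fun t ht => (hderiv t ht).continuousAt.continuousWithinAt) ?_ ?_ <;>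
    rw [interior_Ioi] <;> intro t ht
  · exact (hderiv t ht).hasDerivWithinAt
  · exact mul_nonpos_of_nonpos_of_nonneg (by linarith [hp t ht]) (rpow_nonneg ht.le _)

theorem apply_le_div_rpow_mul_apply {f f' : ℝ → ℝ} {p : ℝ}
    (hf : ∀ t, 0 < t → HasDerivAt f (f' t) t) (hp : ∀ t, 0 < t → t * f' t ≤ p * f t)
    {x y : ℝ} (hx : 0 < x) (hxy : x ≤ y) :
    f y ≤ (y / x) ^ p * f x := by
  have hy : 0 < y := hx.trans_le hxy
  have h := antitoneOn_mul_rpow_neg hf hp hx hy hxy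
  simp only [rpow_neg hx.le, rpow_neg hy.le, ← div_eq_mul_inv] at h
  rw [div_le_div_iff₀ (rpow_pos_of_pos hy p) (rpow_pos_of_pos hx p)] at h
  rw [div_rpow hy.le hx.le, div_mul_eq_mul_div, le_div_iff₀ (rpow_pos_of_pos hx p)]
  linarith

theorem apply_two_mul_le_two_rpow_mul_apply {f f' : ℝ → ℝ} {p : ℝ}
    (hf : ∀ t, 0 < t → HasDerivAt f (f' t) t) (hp : ∀ t, 0 < t → t * f' t ≤ p * f t)
    {x : ℝ} (hx : 0 < x) :
    f (2 * x) ≤ 2 ^ p * f x := by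
  simpa [hx.ne'] using apply_le_div_rpow_mul_apply hf hp hx (by linarith : x ≤ 2 * x)

theorem MonotoneOn.intervalIntegral_le_mul {f : ℝ → ℝ} {u v : ℝ} (huv : u ≤ v)
    (hf : MonotoneOn f (Set.Icc u v)) :
    ∫ x in u..v, f x ≤ (v - u) * f v := by
  have hint : IntervalIntegrable f volume u v := by
    apply MonotoneOn.intervalIntegrable; rwa [Set.uIcc_of_le huv]
  calc ∫ x in u..v, f x ≤ ∫ _ in u..v, f v :=
        intervalIntegral.integral_mono_on huv hint intervalIntegrable_const
          fun x hx => hf hx (Set.right_mem_Icc.2 huv) hx.2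
    _ = (v - u) * f v := by simp

theorem MonotoneOn.mul_le_intervalIntegral {f : ℝ → ℝ} {u v : ℝ} (huv : u ≤ v)
    (hf : MonotoneOn f (Set.Icc u v)) :
    (v - u) * f u ≤ ∫ x in u..v, f x := by
  have hint : IntervalIntegrable f volume u v := by
    apply MonotoneOn.intervalIntegrable; rwa [Set.uIcc_of_le huv]
  calc (v - u) * f u = ∫ _ in u..v, f u := by simp
    _ ≤ ∫ x in u..v, f x :=
        intervalIntegral.integral_mono_on huv intervalIntegrable_const hint
          fun x hx => hf (Set.left_mem_Icc.2 huv) hx hx.1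

theorem MonotoneOn.half_mul_le_intervalIntegral {f : ℝ → ℝ} {t : ℝ} (ht : 0 ≤ t)
    (hf : MonotoneOn f (Set.Icc 0 t)) (hf₀ : 0 ≤ f 0) :
    t / 2 * f (t / 2) ≤ ∫ x in (0:ℝ)..t, f x := by
  have hint : ∀ u v, 0 ≤ u → u ≤ v → v ≤ t → IntervalIntegrable f volume u v := fun u v hu huv hv =>
    MonotoneOn.intervalIntegrable <| hf.mono <| by
      rw [Set.uIcc_of_le huv]; exact Set.Icc_subset_Icc hu hv
  have hhalf : 0 ≤ t / 2 := by linarith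
  have hfirst : 0 ≤ ∫ x in (0:ℝ)..t / 2, f x :=
    intervalIntegral.integral_nonneg hhalf fun x hx =>
      hf₀.trans (hf (Set.left_mem_Icc.2 ht) ⟨hx.1, by linarith [hx.2]⟩ hx.1)
  have hsecond :=
    (hf.mono (Set.Icc_subset_Icc_left hhalf)).mul_le_intervalIntegral (half_le_self ht)
  rw [← intervalIntegral.integral_add_adjacent_intervals
    (hint 0 (t / 2) le_rfl hhalf (half_le_self ht)) (hint (t / 2) t hhalf (half_le_self ht) le_rfl)]
  linarith

theorem MonotoneOn.nonneg_of_nonneg_zero {f : ℝ → ℝ} (hf : MonotoneOn f (Set.Ici 0))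
    (h₀ : 0 ≤ f 0) {x : ℝ} (hx : 0 ≤ x) : 0 ≤ f x :=
  h₀.trans (hf Set.self_mem_Ici hx hx)

theorem monotoneOn_div_add_left {a : ℝ} (ha : 0 ≤ a) :
    MonotoneOn (fun s => s / (a + s)) (Set.Ici 0) := by
  intro x hx y hy hxy
  rcases (Set.mem_Ici.1 hx).eq_or_lt with rfl | hx'
  · simp only [zero_div]; exact div_nonneg hy (by linarith [Set.mem_Ici.1 hy])
  · rw [div_le_div_iff₀ (by linarith) (by linarith)]; nlinarith

theorem monotoneOn_shiftedIntegrand {φ' : ℝ → ℝ} (hmono : MonotoneOn φ' (Set.Ici 0))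
    (h₀ : 0 ≤ φ' 0) {a : ℝ} (ha : 0 ≤ a) :
    MonotoneOn (fun s => φ' (a + s) * s / (a + s)) (Set.Ici 0) := by
  simp only [mul_div_assoc]
  exact MonotoneOn.mul (f := fun s => φ' (a + s)) (g := fun s => s / (a + s))
    (fun x hx y hy hxy => hmono (add_nonneg ha hx) (add_nonneg ha hy) (add_le_add_right hxy a))
    (monotoneOn_div_add_left ha) (fun x hx => hmono.nonneg_of_nonneg_zero h₀ (add_nonneg ha hx))
    fun x hx => div_nonneg hx (add_nonneg ha hx)

section ShiftedPhi

variable {φ' : ℝ → ℝ}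

theorem intervalIntegrable_shiftedIntegrand (hmono : MonotoneOn φ' (Set.Ici 0)) (h₀ : 0 ≤ φ' 0)
    {a t : ℝ} (ha : 0 ≤ a) (ht : 0 ≤ t) :
    IntervalIntegrable (fun s => φ' (a + s) * s / (a + s)) volume 0 t :=
  ((monotoneOn_shiftedIntegrand hmono h₀ ha).mono <| by
    rw [Set.uIcc_of_le ht]; exact Set.Icc_subset_Ici_self).intervalIntegrable

theorem shiftedPhi_le_mul_of_le (hmono : MonotoneOn φ' (Set.Ici 0)) (h₀ : 0 ≤ φ' 0)
    {a t : ℝ} (ha : 0 ≤ a) (hat : a ≤ t) :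
    shiftedPhi φ' a t ≤ t * φ' (2 * t) := by
  have ht : 0 ≤ t := ha.trans hat
  have hat' : (0 : ℝ) ≤ a + t := by linarith
  calc shiftedPhi φ' a t ≤ (t - 0) * (φ' (a + t) * (t / (a + t))) := by
        simpa only [shiftedPhi, mul_div_assoc] using ((monotoneOn_shiftedIntegrand hmono h₀ ha).mono
          Set.Icc_subset_Ici_self).intervalIntegral_le_mul ht
    _ ≤ t * φ' (a + t) := by
        rw [sub_zero]
        exact mul_le_mul_of_nonneg_left (mul_le_of_le_one_right
          (hmono.nonneg_of_nonneg_zero h₀ hat') (div_le_one_of_le₀ (by linarith) hat')) ht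
    _ ≤ t * φ' (2 * t) :=
        mul_le_mul_of_nonneg_left (hmono hat' (by linarith : (0 : ℝ) ≤ 2 * t) (by linarith)) ht

theorem mul_le_shiftedPhi_of_le (hmono : MonotoneOn φ' (Set.Ici 0)) (h₀ : 0 ≤ φ' 0)
    {a t : ℝ} (ha : 0 ≤ a) (hat : a ≤ t) :
    t / 6 * φ' (t / 2) ≤ shiftedPhi φ' a t := by
  rcases (ha.trans hat).eq_or_lt with rfl | ht
  · simp [shiftedPhi]
  have ht2 : (0 : ℝ) ≤ t / 2 := by linarith
  have hthird : 1 / 3 ≤ t / 2 / (a + t / 2) := by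
    rw [div_le_div_iff₀ (by norm_num) (by linarith)]; linarith
  calc t / 6 * φ' (t / 2) = t / 2 * (φ' (t / 2) * (1 / 3)) := by ring
    _ ≤ t / 2 * (φ' (a + t / 2) * (t / 2 / (a + t / 2))) := by
        gcongr
        · exact hmono.nonneg_of_nonneg_zero h₀ (by linarith)
        · exact hmono ht2 (by linarith : (0 : ℝ) ≤ a + t / 2) (by linarith)
    _ ≤ shiftedPhi φ' a t := by
        simpa only [shiftedPhi, mul_div_assoc] using ((monotoneOn_shiftedIntegrand hmono h₀ ha).mono
          Set.Icc_subset_Ici_self).half_mul_le_intervalIntegral ht.le (by simp)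

theorem mul_sq_le_shiftedPhi_of_le (hmono : MonotoneOn φ' (Set.Ici 0)) (h₀ : 0 ≤ φ' 0)
    {a t : ℝ} (ha : 0 < a) (ht : 0 ≤ t) (hta : t ≤ a) :
    φ' a / (4 * a) * t ^ 2 ≤ shiftedPhi φ' a t := by
  calc φ' a / (4 * a) * t ^ 2 = ∫ s in (0:ℝ)..t, φ' a / (2 * a) * s := by
        rw [intervalIntegral.integral_const_mul, integral_id]; field_simp; ring
    _ ≤ shiftedPhi φ' a t := by
        refine intervalIntegral.integral_mono_on ht
          ((continuous_const_mul _).intervalIntegrable _ _)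
          (intervalIntegrable_shiftedIntegrand hmono h₀ ha.le ht) fun s hs => ?_
        have has : (0 : ℝ) ≤ a + s := by linarith [hs.1]
        rw [div_mul_eq_mul_div]
        exact div_le_div₀ (mul_nonneg (hmono.nonneg_of_nonneg_zero h₀ has) hs.1)
          (mul_le_mul_of_nonneg_right (hmono ha.le has (by linarith [hs.1])) hs.1)
          (by linarith [hs.1]) (by linarith [hs.2])

theorem shiftedPhi_le_mul_sq_of_le (hmono : MonotoneOn φ' (Set.Ici 0)) (h₀ : 0 ≤ φ' 0)
    {a t : ℝ} (ha : 0 < a) (ht : 0 ≤ t) (hta : t ≤ a) :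
    shiftedPhi φ' a t ≤ φ' (2 * a) / (2 * a) * t ^ 2 := by
  calc shiftedPhi φ' a t ≤ ∫ s in (0:ℝ)..t, φ' (2 * a) / a * s := by
        refine intervalIntegral.integral_mono_on ht
          (intervalIntegrable_shiftedIntegrand hmono h₀ ha.le ht)
          ((continuous_const_mul _).intervalIntegrable _ _) fun s hs => ?_
        have has : (0 : ℝ) ≤ a + s := by linarith [hs.1]
        rw [div_mul_eq_mul_div]
        exact div_le_div₀ (mul_nonneg (hmono.nonneg_of_nonneg_zero h₀ (by linarith)) hs.1)
          (mul_le_mul_of_nonneg_right (hmono has (by linarith : (0 : ℝ) ≤ 2 * a)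
            (by linarith [hs.2])) hs.1) ha (by linarith [hs.1])
    _ = φ' (2 * a) / (2 * a) * t ^ 2 := by
        rw [intervalIntegral.integral_const_mul, integral_id]; field_simp; ring

end ShiftedPhi

theorem shiftedPhi_comparable_phi_of_le {φ φ' : ℝ → ℝ} {K : ℝ}
    (hmono : MonotoneOn φ' (Set.Ici 0)) (h₀ : 0 ≤ φ' 0)
    (hφ : ∀ t, 0 ≤ t → φ t = ∫ s in (0:ℝ)..t, φ' s)
    (hK : 0 ≤ K) (hdbl : ∀ x, 0 < x → φ' (2 * x) ≤ K * φ' x)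
    {a t : ℝ} (ha : 0 ≤ a) (hat : a ≤ t) :
    φ t ≤ 6 * K * shiftedPhi φ' a t ∧ shiftedPhi φ' a t ≤ 2 * K ^ 2 * φ t := by
  rcases (ha.trans hat).eq_or_lt with rfl | ht
  · simp [hφ, shiftedPhi]
  have hmono' : MonotoneOn φ' (Set.Icc 0 t) := hmono.mono Set.Icc_subset_Ici_self
  have hφ_le : φ t ≤ t * φ' t := by
    simpa [hφ t ht.le] using hmono'.intervalIntegral_le_mul ht.le
  have hle_φ : t / 2 * φ' (t / 2) ≤ φ t :=
    hφ t ht.le ▸ hmono'.half_mul_le_intervalIntegral ht.le h₀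
  have hdbl_half : φ' t ≤ K * φ' (t / 2) := by
    simpa [mul_div_cancel₀] using hdbl (t / 2) (by linarith)
  constructor
  · calc φ t ≤ t * φ' t := hφ_le
      _ ≤ t * (K * φ' (t / 2)) := mul_le_mul_of_nonneg_left hdbl_half ht.le
      _ = 6 * K * (t / 6 * φ' (t / 2)) := by ring
      _ ≤ 6 * K * shiftedPhi φ' a t :=
          mul_le_mul_of_nonneg_left (mul_le_shiftedPhi_of_le hmono h₀ ha hat) (by positivity)
  · calc shiftedPhi φ' a t ≤ t * φ' (2 * t) := shiftedPhi_le_mul_of_le hmono h₀ ha hat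
      _ ≤ t * (K * φ' t) := mul_le_mul_of_nonneg_left (hdbl t ht) ht.le
      _ ≤ t * (K * (K * φ' (t / 2))) := by gcongr
      _ = 2 * K ^ 2 * (t / 2 * φ' (t / 2)) := by ring
      _ ≤ 2 * K ^ 2 * φ t := by gcongr

theorem shiftedPhi_comparable_sq_of_le {φ' φ'' : ℝ → ℝ} {K d d' a t : ℝ}
    (hmono : MonotoneOn φ' (Set.Ici 0)) (h₀ : 0 ≤ φ' 0)
    (hK : 0 ≤ K) (hdbl : φ' (2 * a) ≤ K * φ' a)
    (hlow : d * (a * φ'' a) ≤ φ' a) (hup : φ' a ≤ d' * (a * φ'' a))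
    (ha : 0 < a) (ht : 0 ≤ t) (hta : t ≤ a) :
    d / 4 * (t ^ 2 * φ'' a) ≤ shiftedPhi φ' a t ∧
      shiftedPhi φ' a t ≤ K * d' / 2 * (t ^ 2 * φ'' a) := by
  constructor
  · calc d / 4 * (t ^ 2 * φ'' a) = d * (a * φ'' a) / (4 * a) * t ^ 2 := by
          field_simp
      _ ≤ φ' a / (4 * a) * t ^ 2 := by gcongr
      _ ≤ shiftedPhi φ' a t := mul_sq_le_shiftedPhi_of_le hmono h₀ ha ht hta
  · calc shiftedPhi φ' a t ≤ φ' (2 * a) / (2 * a) * t ^ 2 :=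
          shiftedPhi_le_mul_sq_of_le hmono h₀ ha ht hta
      _ ≤ K * (d' * (a * φ'' a)) / (2 * a) * t ^ 2 := by gcongr; exact hdbl.trans (by gcongr)
      _ = K * d' / 2 * (t ^ 2 * φ'' a) := by field_simp

/-- Under the Assumption: `φ_a(t) ∼ φ(t)` for `t ≥ a`, and `φ_a(t) ∼ t²·φ''(a)` for
`0 ≤ t ≤ a`, with constants independent of `a` and `t`. -/
theorem shifted_equiv (φ φ' φ'' : ℝ → ℝ) (hA : SatisfiesAssumption φ φ' φ'')
    (d d' : ℝ) (hd : 0 < d) (hd' : 0 < d')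
    (hequiv : ∀ t : ℝ, 0 < t → d * (t * φ'' t) ≤ φ' t ∧ φ' t ≤ d' * (t * φ'' t)) :
    ∃ c₁ c₂ : ℝ, 0 < c₁ ∧ 0 < c₂ ∧
      ∀ a : ℝ, 0 ≤ a →
        (∀ t : ℝ, a ≤ t → c₁ * φ t ≤ shiftedPhi φ' a t ∧ shiftedPhi φ' a t ≤ c₂ * φ t) ∧
        (∀ t : ℝ, 0 ≤ t → t ≤ a →
          c₁ * (t ^ 2 * φ'' a) ≤ shiftedPhi φ' a t ∧
          shiftedPhi φ' a t ≤ c₂ * (t ^ 2 * φ'' a)) := by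
  obtain ⟨⟨-, -, hφ'₀, hφ, -, hmono, -, -⟩, -, -, hderiv, -⟩ := hA
  have h₀ : 0 ≤ φ' 0 := hφ'₀.ge
  set K : ℝ := 2 ^ (1 / d)
  have hK : 0 < K := by positivity
  have hdbl : ∀ x, 0 < x → φ' (2 * x) ≤ K * φ' x := fun x hx =>
    apply_two_mul_le_two_rpow_mul_apply hderiv (fun t ht => by
      rw [one_div_mul_eq_div, le_div_iff₀' hd]; exact (hequiv t ht).1) hx
  refine ⟨min (1 / (6 * K)) (d / 4), max (2 * K ^ 2) (K * d' / 2), by positivity, by positivity,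
    fun a ha => ⟨fun t hat => ?_, fun t ht hta => ?_⟩⟩
  · obtain ⟨hlow, hup⟩ := shiftedPhi_comparable_phi_of_le hmono h₀ hφ hK.le hdbl ha hat
    have hφt : 0 ≤ φ t := hφ t (ha.trans hat) ▸ intervalIntegral.integral_nonneg (ha.trans hat)
      fun s hs => hmono.nonneg_of_nonneg_zero h₀ hs.1
    refine ⟨?_, hup.trans (by gcongr; exact le_max_left _ _)⟩
    calc min (1 / (6 * K)) (d / 4) * φ t ≤ 1 / (6 * K) * φ t := by gcongr; exact min_le_left _ _
      _ ≤ shiftedPhi φ' a t := by rw [one_div_mul_eq_div, div_le_iff₀' (by positivity)]; exact hlow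
  · rcases ht.eq_or_lt with rfl | ht'
    · simp [shiftedPhi]
    have ha' : 0 < a := ht'.trans_le hta
    obtain ⟨hlow, hup⟩ := hequiv a ha'
    have hφ''a : 0 ≤ φ'' a := (mul_nonneg_iff_of_pos_left (mul_pos hd' ha')).1 <| by
      rw [mul_assoc]; exact (hmono.nonneg_of_nonneg_zero h₀ ha'.le).trans hup
    obtain ⟨hlow', hup'⟩ :=
      shiftedPhi_comparable_sq_of_le hmono h₀ hK.le (hdbl a ha') hlow hup ha' ht hta
    exact ⟨le_trans (by gcongr; exact min_le_right _ _) hlow',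
      hup'.trans (by gcongr; exact le_max_right _ _)⟩
end

section
/- Let φ be an N-function satisfying the Assumption (C¹ ∩ C² away from 0, φ'(t) ∼ t·φ''(t)), and let φ_a be the shifted N-function. Then there exists c > 0 such that φ_a(s·t) ≤ c·s²·φ_a(t) for all s ∈ [0,1], a ≥ 0, and t ∈ [0,a]. -/
open MeasureTheory Real Filter

/-- Under the Assumption: `φ_a(s·t) ≤ c·s²·φ_a(t)` for all `s ∈ [0,1]`, `a ≥ 0`,
`t ∈ [0,a]`. -/
theorem shifted_scaling (φ φ' φ'' : ℝ → ℝ) (hA : SatisfiesAssumption φ φ' φ'')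
    (d d' : ℝ) (hd : 0 < d) (hd' : 0 < d')
    (hequiv : ∀ t : ℝ, 0 < t → d * (t * φ'' t) ≤ φ' t ∧ φ' t ≤ d' * (t * φ'' t)) :
    ∃ c : ℝ, 0 < c ∧
      ∀ s a t : ℝ, 0 ≤ s → s ≤ 1 → 0 ≤ a → 0 ≤ t → t ≤ a →
        shiftedPhi φ' a (s * t) ≤ c * s ^ 2 * shiftedPhi φ' a t := by
  obtain ⟨hN, hderiv, hcont, hderiv2, hcont2⟩ := hA
  obtain ⟨-, -, hφ'0, -, -, hmono, hpos, -⟩ := hN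
  have hφ'nonneg : ∀ x : ℝ, 0 ≤ x → 0 ≤ φ' x := fun x hx => by
    rcases hx.eq_or_lt with h | h
    · rw [← h, hφ'0]
    · exact (hpos x h).le
  refine ⟨2, two_pos, ?_⟩
  intro s a t hs hs1 ha ht hta
  rcases eq_or_lt_of_le ha with rfl | ha0
  · have ht0 : t = 0 := le_antisymm hta ht
    subst ht0
    simp [shiftedPhi]
  rcases eq_or_lt_of_le hs with rfl | hs0
  · simp [shiftedPhi]
  have hst : 0 ≤ s * t := mul_nonneg hs ht
  have hstt : s * t ≤ t := by nlinarith
  -- continuity facts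
  have hcomp : ∀ r : ℝ, 0 ≤ r → ContinuousOn (fun u => φ' (a + r * u)) (Set.Ici 0) := by
    intro r hr
    exact hcont.comp ((continuous_const.add (continuous_const.mul continuous_id)).continuousOn)
      (fun u hu => add_nonneg ha0.le (mul_nonneg hr hu))
  have hc1 : ContinuousOn (fun u => φ' (a + u) * u / (a + u)) (Set.Ici 0) := by
    apply ContinuousOn.div
    · exact ((hcomp 1 zero_le_one).congr (fun u _ => by rw [one_mul])).mul continuousOn_id
    · exact (continuous_const.add continuous_id).continuousOn
    · intro u hu
      have : (0:ℝ) ≤ u := hu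
      positivity
  have hc2 : ContinuousOn (fun u => φ' (a + u) * u / a) (Set.Ici 0) :=
    (((hcomp 1 zero_le_one).congr (fun u _ => by rw [one_mul])).mul continuousOn_id).div_const a
  have hc3 : ContinuousOn (fun u => φ' (a + u) * u) (Set.Ici 0) :=
    ((hcomp 1 zero_le_one).congr (fun u _ => by rw [one_mul])).mul continuousOn_id
  have hc4 : ContinuousOn (fun u => φ' (a + s * u) * u) (Set.Ici 0) :=
    (hcomp s hs).mul continuousOn_id
  have hsub : ∀ b : ℝ, 0 ≤ b → Set.uIcc (0:ℝ) b ⊆ Set.Ici 0 := by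
    intro b hb
    rw [Set.uIcc_of_le hb]
    exact Set.Icc_subset_Ici_self
  have int1 : ∀ b : ℝ, 0 ≤ b →
      IntervalIntegrable (fun u => φ' (a + u) * u / (a + u)) volume 0 b :=
    fun b hb => (hc1.mono (hsub b hb)).intervalIntegrable
  have int2 : ∀ b : ℝ, 0 ≤ b →
      IntervalIntegrable (fun u => φ' (a + u) * u / a) volume 0 b :=
    fun b hb => (hc2.mono (hsub b hb)).intervalIntegrable
  have int3 : IntervalIntegrable (fun u => φ' (a + u) * u) volume 0 t :=
    (hc3.mono (hsub t ht)).intervalIntegrable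
  have int4 : IntervalIntegrable (fun u => φ' (a + s * u) * u) volume 0 t :=
    (hc4.mono (hsub t ht)).intervalIntegrable
  calc shiftedPhi φ' a (s * t)
      ≤ ∫ x in (0:ℝ)..s * t, φ' (a + x) * x / a := by
        apply intervalIntegral.integral_mono_on hst (int1 _ hst) (int2 _ hst)
        intro x hx
        have hx0 : 0 ≤ x := hx.1
        gcongr
        · exact mul_nonneg (hφ'nonneg _ (by linarith)) hx0
        · linarith
    _ = 1 / a * ∫ x in (0:ℝ)..s * t, φ' (a + x) * x := by
        rw [intervalIntegral.integral_div]; ring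
    _ = 1 / a * (s * ∫ u in (0:ℝ)..t, φ' (a + s * u) * (s * u)) := by
        rw [intervalIntegral.integral_comp_mul_left (fun x => φ' (a + x) * x) hs0.ne',
          mul_zero, smul_eq_mul, mul_inv_cancel_left₀ hs0.ne']
    _ = s ^ 2 / a * ∫ u in (0:ℝ)..t, φ' (a + s * u) * u := by
        have : ∀ u : ℝ, φ' (a + s * u) * (s * u) = s * (φ' (a + s * u) * u) :=
          fun u => by ring
        simp_rw [this, intervalIntegral.integral_const_mul]
        ring
    _ ≤ s ^ 2 / a * ∫ u in (0:ℝ)..t, φ' (a + u) * u := by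
        apply mul_le_mul_of_nonneg_left _ (by positivity)
        apply intervalIntegral.integral_mono_on ht int4 int3
        intro u hu
        have hu0 : 0 ≤ u := hu.1
        apply mul_le_mul_of_nonneg_right _ hu0
        exact hmono (by simp; positivity) (by simp; linarith)
          (by nlinarith)
    _ ≤ s ^ 2 / a * ∫ u in (0:ℝ)..t, 2 * a * (φ' (a + u) * u / (a + u)) := by
        apply mul_le_mul_of_nonneg_left _ (by positivity)
        apply intervalIntegral.integral_mono_on ht int3 ((int1 t ht).const_mul _)
        intro u hu
        obtain ⟨hu0, hut⟩ := hu
        have hau : 0 < a + u := by linarith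
        have hnum : 0 ≤ φ' (a + u) * u := mul_nonneg (hφ'nonneg _ (by linarith)) hu0
        rw [mul_div_assoc', le_div_iff₀ hau]
        nlinarith
    _ = 2 * s ^ 2 * shiftedPhi φ' a t := by
        rw [intervalIntegral.integral_const_mul, shiftedPhi]
        field_simp
end

section
/- Let φ be an N-function satisfying Assumption (φ ∈ C¹ ∩ C²((0,∞)), φ'(t) ∼ t·φ''(t)), and let ψ be the associated N-function defined by ψ'(t) = √(t·φ'(t)). Then ψ''(t) ∼ √(φ''(t)) uniformly in t > 0. -/
open MeasureTheory Real Filter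

/-- Under the Assumption, with `ψ' (t) = √(t·φ'(t))` and `ψ''` its derivative:
`ψ''(t) ∼ √(φ''(t))` uniformly in `t > 0`. -/
theorem psi''_equiv_sqrt_phi'' (φ φ' φ'' : ℝ → ℝ) (hA : SatisfiesAssumption φ φ' φ'')
    (d d' : ℝ) (hd : 0 < d) (hd' : 0 < d')
    (hequiv : ∀ t : ℝ, 0 < t → d * (t * φ'' t) ≤ φ' t ∧ φ' t ≤ d' * (t * φ'' t))
    (ψ' ψ'' : ℝ → ℝ) (hψ' : ∀ t : ℝ, ψ' t = Real.sqrt (t * φ' t))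
    (hψ'' : ∀ t : ℝ, 0 < t → HasDerivAt ψ' (ψ'' t) t) :
    ∃ c₁ c₂ : ℝ, 0 < c₁ ∧ 0 < c₂ ∧
      ∀ t : ℝ, 0 < t →
        c₁ * Real.sqrt (φ'' t) ≤ ψ'' t ∧ ψ'' t ≤ c₂ * Real.sqrt (φ'' t) := by

  refine ⟨(d + 1) / (2 * Real.sqrt d'), (d' + 1) / (2 * Real.sqrt d), by positivity, by positivity, ?_⟩
  intro t ht
  have ha : 0 < φ' t := hA.1.2.2.2.2.2.2.1 t ht
  have hb : 0 < φ'' t := by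
    by_contra h
    push_neg at h
    have h2 : t * φ'' t ≤ 0 := mul_nonpos_of_nonneg_of_nonpos ht.le h
    nlinarith [(hequiv t ht).2]
  have hfun : ψ' = fun s => Real.sqrt (s * φ' s) := funext hψ'
  have h1 : HasDerivAt (fun s => s * φ' s) (1 * φ' t + t * φ'' t) t :=
    (hasDerivAt_id t).mul (hA.2.2.2.1 t ht)
  have h2 := h1.sqrt (ne_of_gt (by positivity : (0:ℝ) < t * φ' t))
  have h2' : HasDerivAt ψ' ((1 * φ' t + t * φ'' t) / (2 * Real.sqrt (t * φ' t))) t := by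
    rw [hfun]; exact h2
  have h3 : ψ'' t = (φ' t + t * φ'' t) / (2 * Real.sqrt (t * φ' t)) := by
    have := (hψ'' t ht).unique h2'
    rw [this, one_mul]
  set sqb := Real.sqrt (φ'' t) with hsqb
  set sqta := Real.sqrt (t * φ' t) with hsqta
  have hsqbp : 0 < sqb := Real.sqrt_pos.mpr hb
  have hsqtap : 0 < sqta := Real.sqrt_pos.mpr (by positivity)
  have hsqdp : 0 < Real.sqrt d := Real.sqrt_pos.mpr hd
  have hsqd'p : 0 < Real.sqrt d' := Real.sqrt_pos.mpr hd'
  have hbsq : sqb ^ 2 = φ'' t := Real.sq_sqrt hb.le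
  have hdsq : (Real.sqrt d) ^ 2 = d := Real.sq_sqrt hd.le
  have hd'sq : (Real.sqrt d') ^ 2 = d' := Real.sq_sqrt hd'.le
  have htasq : sqta ^ 2 = t * φ' t := Real.sq_sqrt (by positivity)
  have hsq1 : sqta ≤ Real.sqrt d' * (t * sqb) := by
    have key : t * φ' t ≤ (Real.sqrt d' * (t * sqb)) ^ 2 := by
      have e : (Real.sqrt d' * (t * sqb)) ^ 2 = d' * (t ^ 2 * φ'' t) := by
        rw [mul_pow, mul_pow, hd'sq, hbsq]
      rw [e]; nlinarith [(hequiv t ht).2]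
    have := Real.sqrt_le_sqrt key
    rwa [Real.sqrt_sq (by positivity)] at this
  have hsq2 : Real.sqrt d * (t * sqb) ≤ sqta := by
    have key : (Real.sqrt d * (t * sqb)) ^ 2 ≤ t * φ' t := by
      have e : (Real.sqrt d * (t * sqb)) ^ 2 = d * (t ^ 2 * φ'' t) := by
        rw [mul_pow, mul_pow, hdsq, hbsq]
      rw [e]; nlinarith [(hequiv t ht).1]
    have := Real.sqrt_le_sqrt key
    rwa [Real.sqrt_sq (by positivity)] at this
  have key1 : sqb * sqta ≤ Real.sqrt d' * (t * φ'' t) := by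
    calc sqb * sqta ≤ sqb * (Real.sqrt d' * (t * sqb)) :=
          mul_le_mul_of_nonneg_left hsq1 hsqbp.le
      _ = Real.sqrt d' * (t * sqb ^ 2) := by ring
      _ = Real.sqrt d' * (t * φ'' t) := by rw [hbsq]
  have key2 : Real.sqrt d * (t * φ'' t) ≤ sqb * sqta := by
    calc Real.sqrt d * (t * φ'' t) = sqb * (Real.sqrt d * (t * sqb)) := by
          rw [← hbsq]; ring
      _ ≤ sqb * sqta := mul_le_mul_of_nonneg_left hsq2 hsqbp.le
  rw [h3]
  constructor
  · rw [div_mul_eq_mul_div, div_le_div_iff₀ (by positivity) (by positivity)]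
    nlinarith [mul_le_mul_of_nonneg_left key1 (show (0:ℝ) ≤ d + 1 by linarith),
      mul_le_mul_of_nonneg_left (hequiv t ht).1 hsqd'p.le]
  · rw [div_mul_eq_mul_div, div_le_div_iff₀ (by positivity) (by positivity)]
    nlinarith [mul_le_mul_of_nonneg_left key2 (show (0:ℝ) ≤ d' + 1 by linarith),
      mul_le_mul_of_nonneg_left (hequiv t ht).2 hsqdp.le]
end

section
/- Let φ be an N-function of type (p₀, p₁) with 1 < p₀ ≤ p₁ < ∞ and satisfying φ'(t) ∼ t·φ''(t) and φ(t) ∼ t·φ'(t). Then φ'(1 + √t) / φ'(t) → 0 as t → ∞; more precisely there exists C > 0 such that φ'(1 + (t−1)/√t) / φ'(t) ≤ C·t^{(1−p₀)/2} for all t > 1. -/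
open MeasureTheory Real Filter

/-- For an N-function of type `(p₀,p₁)` with `φ' ∼ t·φ''` and `φ ∼ t·φ'`:
`φ'(1+√t)/φ'(t) → 0` as `t → ∞`; quantitatively
`φ'(1+(t−1)/√t)/φ'(t) ≤ C·t^{(1−p₀)/2}` for `t > 1`. -/
theorem phi'_sqrt_decay (φ φ' φ'' : ℝ → ℝ) (hA : SatisfiesAssumption φ φ' φ'')
    (p₀ p₁ Cp : ℝ) (hp₀ : 1 < p₀) (hp₀₁ : p₀ ≤ p₁) (hCp : 0 < Cp)
    (htype : ∀ s t : ℝ, 0 ≤ s → 0 ≤ t → φ (s * t) ≤ Cp * max (s ^ p₀) (s ^ p₁) * φ t)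
    (d₁ d₂ : ℝ) (hd₁ : 0 < d₁) (hd₂ : 0 < d₂)
    (hequiv : ∀ t : ℝ, 0 < t → d₁ * (t * φ'' t) ≤ φ' t ∧ φ' t ≤ d₂ * (t * φ'' t))
    (e₁ e₂ : ℝ) (he₁ : 0 < e₁) (he₂ : 0 < e₂)
    (hequiv' : ∀ t : ℝ, 0 ≤ t → e₁ * (t * φ' t) ≤ φ t ∧ φ t ≤ e₂ * (t * φ' t)) :
    Tendsto (fun t : ℝ => φ' (1 + Real.sqrt t) / φ' t) atTop (nhds 0) ∧
    ∃ C : ℝ, 0 < C ∧ ∀ t : ℝ, 1 < t →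
      φ' (1 + (t - 1) / Real.sqrt t) / φ' t ≤ C * t ^ ((1 - p₀) / 2) := by
  obtain ⟨⟨_, _, _, _, _, _, hpos, _⟩, _⟩ := hA
  set K : ℝ := Cp * e₂ / e₁ with hKdef
  have hK : 0 < K := by positivity
  have key : ∀ u t : ℝ, 0 < u → u ≤ t →
      φ' u ≤ K * (u / t) ^ (p₀ - 1) * φ' t := by
    intro u t hu hut
    have ht : 0 < t := lt_of_lt_of_le hu hut
    have hl0 : 0 < u / t := div_pos hu ht
    have hl1 : u / t ≤ 1 := (div_le_one ht).2 hut
    have hlt : (u / t) * t = u := div_mul_cancel₀ u ht.ne'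
    have h1 := (hequiv' u hu.le).1
    have h2 := htype (u / t) t hl0.le ht.le
    rw [hlt] at h2
    have hmax : max ((u / t) ^ p₀) ((u / t) ^ p₁) = (u / t) ^ p₀ :=
      max_eq_left (Real.rpow_le_rpow_of_exponent_ge hl0 hl1 hp₀₁)
    rw [hmax] at h2
    have h3 := (hequiv' t ht.le).2
    set A : ℝ := (u / t) ^ p₀ with hAdef
    have hA0 : 0 < A := Real.rpow_pos_of_pos hl0 _
    have h4 : e₁ * (u * φ' u) ≤ Cp * A * (e₂ * (t * φ' t)) := by
      refine h1.trans (h2.trans ?_)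
      exact mul_le_mul_of_nonneg_left h3 (by positivity)
    have h5 : φ' u ≤ (Cp * A * (e₂ * (t * φ' t))) / (e₁ * u) := by
      rw [le_div_iff₀ (by positivity)]
      nlinarith [h4]
    have hexp : (u / t) ^ (p₀ - 1) = A / (u / t) := by
      rw [hAdef, Real.rpow_sub hl0, Real.rpow_one]
    refine h5.trans_eq ?_
    rw [hexp, hKdef]
    field_simp
  have key2 : ∀ u t : ℝ, 0 < u → u ≤ t → u ≤ 2 * Real.sqrt t →
      φ' u / φ' t ≤ (K * 2 ^ (p₀ - 1)) * t ^ ((1 - p₀) / 2) := by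
    intro u t hu hut h2s
    have ht : 0 < t := lt_of_lt_of_le hu hut
    have hs : 0 < Real.sqrt t := Real.sqrt_pos.2 ht
    have hφt : 0 < φ' t := hpos t ht
    rw [div_le_iff₀ hφt]
    refine (key u t hu hut).trans ?_
    have hexp : (0:ℝ) ≤ p₀ - 1 := by linarith
    have hb1 : (u / t) ^ (p₀ - 1) ≤ (2 * Real.sqrt t / t) ^ (p₀ - 1) := by
      apply Real.rpow_le_rpow (by positivity) _ hexp
      gcongr
    have heq0 : 2 * Real.sqrt t / t = 2 / Real.sqrt t := by
      rw [div_eq_div_iff ht.ne' hs.ne']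
      nlinarith [Real.mul_self_sqrt ht.le]
    have heq1 : (2 / Real.sqrt t) ^ (p₀ - 1) = 2 ^ (p₀ - 1) * t ^ ((1 - p₀) / 2) := by
      rw [Real.div_rpow (by norm_num) hs.le, div_eq_mul_inv, ← Real.rpow_neg hs.le,
        Real.sqrt_eq_rpow, ← Real.rpow_mul ht.le]
      ring_nf
    have hb2 : (u / t) ^ (p₀ - 1) ≤ 2 ^ (p₀ - 1) * t ^ ((1 - p₀) / 2) := by
      calc (u / t) ^ (p₀ - 1) ≤ (2 * Real.sqrt t / t) ^ (p₀ - 1) := hb1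
        _ = 2 ^ (p₀ - 1) * t ^ ((1 - p₀) / 2) := by rw [heq0, heq1]
    calc K * (u / t) ^ (p₀ - 1) * φ' t
        ≤ K * (2 ^ (p₀ - 1) * t ^ ((1 - p₀) / 2)) * φ' t := by
          apply mul_le_mul_of_nonneg_right _ hφt.le
          exact mul_le_mul_of_nonneg_left hb2 hK.le
      _ = K * 2 ^ (p₀ - 1) * t ^ ((1 - p₀) / 2) * φ' t := by ring
  constructor
  · have hbound : ∀ᶠ t : ℝ in atTop,
        φ' (1 + Real.sqrt t) / φ' t ≤ (K * 2 ^ (p₀ - 1)) * t ^ ((1 - p₀) / 2) := by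
      filter_upwards [eventually_ge_atTop (4:ℝ)] with t ht4
      have ht : (0:ℝ) < t := by linarith
      have hs2 : (2:ℝ) ≤ Real.sqrt t := by
        have := Real.sqrt_le_sqrt ht4
        rwa [show Real.sqrt 4 = 2 by
          rw [show (4:ℝ) = 2 ^ 2 by norm_num, Real.sqrt_sq (by norm_num)]] at this
      have hss : Real.sqrt t * Real.sqrt t = t := Real.mul_self_sqrt ht.le
      apply key2
      · positivity
      · nlinarith
      · nlinarith
    have hnonneg : ∀ᶠ t : ℝ in atTop, 0 ≤ φ' (1 + Real.sqrt t) / φ' t := by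
      filter_upwards [eventually_gt_atTop (0:ℝ)] with t ht
      have h1 : (0:ℝ) < 1 + Real.sqrt t := by positivity
      exact div_nonneg (hpos _ h1).le (hpos t ht).le
    have hlim : Tendsto (fun t : ℝ => (K * 2 ^ (p₀ - 1)) * t ^ ((1 - p₀) / 2))
        atTop (nhds 0) := by
      have h := (tendsto_rpow_neg_atTop (show (0:ℝ) < (p₀ - 1) / 2 by linarith)).const_mul
        (K * 2 ^ (p₀ - 1))
      rw [mul_zero] at h
      convert h using 2 with t
      ring_nf
    exact squeeze_zero' hnonneg hbound hlim
  · refine ⟨K * 2 ^ (p₀ - 1), by positivity, fun t ht => ?_⟩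
    have ht0 : (0:ℝ) < t := by linarith
    have hs : 0 < Real.sqrt t := Real.sqrt_pos.2 ht0
    have hs1 : (1:ℝ) ≤ Real.sqrt t := by
      rw [show (1:ℝ) = Real.sqrt 1 from Real.sqrt_one.symm]
      exact Real.sqrt_le_sqrt ht.le
    have hss : Real.sqrt t * Real.sqrt t = t := Real.mul_self_sqrt ht0.le
    have hu : (0:ℝ) < 1 + (t - 1) / Real.sqrt t := by
      have : 0 ≤ (t - 1) / Real.sqrt t := div_nonneg (by linarith) hs.le
      linarith
    have hut : 1 + (t - 1) / Real.sqrt t ≤ t := by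
      have := div_le_self (show (0:ℝ) ≤ t - 1 by linarith) hs1
      linarith
    have h2s : 1 + (t - 1) / Real.sqrt t ≤ 2 * Real.sqrt t := by
      rw [show 2 * Real.sqrt t = 1 + (2 * Real.sqrt t - 1) by ring]
      have h : (t - 1) / Real.sqrt t ≤ 2 * Real.sqrt t - 1 := by
        rw [div_le_iff₀ hs]
        nlinarith
      linarith
    exact key2 _ t hu hut h2s
end
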